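/- arXiv:2512.03617 — 4 statements merged into one kernel-verified Lean document; each statement's English description precedes it below -/
import Mathlib

section
/- Let p = Σ_{j=0}^{s} c_j χ^{m_j} be a nonzero Laurent polynomial in n variables with c_j ≠ 0 and distinct exponents m_j ∈ ℤ^n. Then p^{n+1}·det(D²log p) = Σ_J (n!·vol(conv{m_j : j∈J}))² · Π_{j∈J} c_j χ^{m_j}, where the sum runs over all subsets J ⊂ {0,…,s} of cardinality n+1, D_i = x_i ∂/∂x_i, and vol denotes Lebesgue measure on ℝ^n. -/
/- Laurent polynomials in n variables over ℂ, the logarithmic derivative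
operators `D_i = x_i ∂/∂x_i`, and the operator `δ(p) = det(D_i D_j log p)`
with values in the fraction field. STATEMENT 0 expresses the formula
`p^(n+1)·δ(p) = Σ_J (n!·vol(conv{m_j : j∈J}))²·Π_{j∈J} c_j χ^{m_j}`. -/

open MeasureTheory

noncomputable section

/-- Laurent polynomials in `n` variables over `ℂ`. -/
abbrev LP (n : ℕ) := AddMonoidAlgebra ℂ (Fin n → ℤ)

instance {n : ℕ} : IsDomain (LP n) := NoZeroDivisors.to_isDomain _

/-- The operator `D_i = x_i ∂/∂x_i` on Laurent polynomials:
`D_i χ^m = m_i χ^m`. -/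
def Dop {n : ℕ} (i : Fin n) (p : LP n) : LP n :=
  p.coeff.sum fun m c => AddMonoidAlgebra.single m ((m i : ℂ) * c)

/-- `δ(p) = det((D_i D_j log p)_{i,j})` as an element of the field of rational
functions; the entry `D_i D_j log p` equals `(D_iD_j p · p − D_i p · D_j p)/p²`. -/
def deltaOp {n : ℕ} (p : LP n) : FractionRing (LP n) :=
  Matrix.det (fun i j : Fin n =>
    algebraMap (LP n) (FractionRing (LP n)) (Dop i (Dop j p) * p - Dop i p * Dop j p) /
      (algebraMap (LP n) (FractionRing (LP n)) p) ^ 2)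

/-- The canonical embedding `ℤ^n → ℝ^n`. -/
def emb {n : ℕ} (m : Fin n → ℤ) : Fin n → ℝ := fun i => (m i : ℝ)

/-!
Write `p = ∑ c_m χ^m` and homogenize the exponents to `(1, m) ∈ ℤ^(n+1)`. With `D_0 = id`, the
bordered Hessian `B = (D_i D_j p)_{0 ≤ i, j ≤ n}` is `∑_m c_m χ^m (1, m)(1, m)ᵀ`. Eliminating the
first column against the corner entry `p` (a Schur complement) gives
`det B = p^(n+1) det(D² log p)`, and the Cauchy–Binet formula expands `det B` as
`∑_J det((1, m)_{m ∈ J})² ∏_{m ∈ J} c_m χ^m`. Finally `|det((1, m)_{m ∈ J})| = n! vol(conv J)`: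
the simplex `conv J` is an affine image of the corner simplex `{x ≥ 0, ∑ x ≤ 1}`, whose volume
`1/n!` is computed by Fubini.
-/

open Matrix Finset Function Pointwise

section CauchyBinet

variable {ι R : Type*} [DecidableEq ι] [CommRing R] {N : ℕ}

theorem sum_perm_eq_sum_image_eq {M : Type*} [AddCommMonoid M] (S : Finset ι) {e : Fin N → ι}
    (he : Injective e) (heS : univ.image e ⊆ S) (g : (Fin N → ι) → M) :
    ∑ σ : Equiv.Perm (Fin N), g (e ∘ σ) =
      ∑ r ∈ Fintype.piFinset (fun _ ↦ S) with Injective r ∧ univ.image r = univ.image e, g r := by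
  refine sum_bij (fun σ _ ↦ e ∘ σ) (fun σ _ ↦ ?_) (fun σ _ τ _ h ↦ ?_) (fun r hr ↦ ?_)
    (fun _ _ ↦ rfl)
  · refine mem_filter.2 ⟨Fintype.mem_piFinset.2 fun k ↦ heS (mem_image_of_mem _ (mem_univ _)),
      he.comp σ.injective, ?_⟩
    rw [← image_image, image_univ_equiv]
  · exact Equiv.ext fun k ↦ he (congrFun h k)
  · obtain ⟨-, hr, himage⟩ := mem_filter.1 hr
    have hrange : Set.range r = Set.range e := by
      simpa only [coe_image, coe_univ, Set.image_univ] using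
        congrArg ((↑) : Finset ι → Set ι) himage
    refine ⟨(Equiv.ofInjective r hr).trans ((Equiv.setCongr hrange).trans
      (Equiv.ofInjective e he).symm), mem_univ _, funext fun k ↦ ?_⟩
    simp [Equiv.apply_ofInjective_symm]

/-- The Cauchy–Binet formula for `U diag(w) Uᵀ`; `f J` is the squared maximal minor of `U` on the
rows `J`, which does not depend on how `J` is enumerated. -/
theorem det_sum_smul_vecMulVec (S : Finset ι) (w : ι → R) (u : ι → Fin N → R) (f : Finset ι → R)
    (hf : ∀ e : Fin N → ι, Injective e → f (univ.image e) = (of fun i j ↦ u (e i) j).det ^ 2) :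
    (∑ m ∈ S, w m • vecMulVec (u m) (u m)).det = ∑ J ∈ S.powersetCard N, f J * ∏ m ∈ J, w m := by
  set V : (Fin N → ι) → R := fun r ↦ (of fun i j ↦ u (r i) j).det
  set T : (Fin N → ι) → R := fun r ↦ (∏ i, w (r i) * u (r i) i) * V r
  have expand : (∑ m ∈ S, w m • vecMulVec (u m) (u m)).det =
      ∑ r ∈ Fintype.piFinset (fun _ ↦ S), T r := by
    have rows : (∑ m ∈ S, w m • vecMulVec (u m) (u m)) =
        of fun i ↦ ∑ m ∈ S, (w m * u m i) • u m := by
      ext i j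
      simp [Matrix.sum_apply, Finset.sum_apply, vecMulVec_apply, mul_assoc]
    rw [rows]
    refine ((detRowAlternating : (Fin N → R) [⋀^Fin N]→ₗ[R] R).toMultilinearMap.map_sum_finset
      (fun i m ↦ (w m * u m i) • u m) _).trans (sum_congr rfl fun r _ ↦ ?_)
    exact det_mul_column (fun i ↦ w (r i) * u (r i) i) (of fun i j ↦ u (r i) j)
  have vanish : ∀ r, ¬Injective r → T r = 0 := fun r hr ↦ by
    obtain ⟨i, j, hij, hne⟩ := Function.not_injective_iff.1 hr
    have : V r = 0 := det_zero_of_row_eq hne (by funext k; simp [hij])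
    simp only [T, this, mul_zero]
  have fiber : ∀ J ∈ S.powersetCard N,
      ∑ r ∈ Fintype.piFinset (fun _ ↦ S) with Injective r ∧ univ.image r = J, T r =
        f J * ∏ m ∈ J, w m := by
    intro J hJ
    obtain ⟨hJS, hcard⟩ := mem_powersetCard.1 hJ
    obtain ⟨e, he, himage⟩ : ∃ e : Fin N → ι, Injective e ∧ univ.image e = J := by
      refine ⟨fun k ↦ (J.equivFinOfCardEq hcard).symm k,
        Subtype.val_injective.comp (Equiv.injective _), ?_⟩
      ext m
      simp only [mem_image, mem_univ, true_and]
      refine ⟨?_, fun hm ↦ ⟨J.equivFinOfCardEq hcard ⟨m, hm⟩, by simp⟩⟩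
      rintro ⟨k, rfl⟩
      exact Subtype.mem _
    subst himage
    have hw : ∀ σ : Equiv.Perm (Fin N), ∏ i, w (e (σ i)) = ∏ m ∈ univ.image e, w m := fun σ ↦ by
      rw [Equiv.prod_comp σ (fun i ↦ w (e i)), prod_image he.injOn]
    have hV : ∀ σ : Equiv.Perm (Fin N), V (e ∘ σ) = Equiv.Perm.sign σ * V e := fun σ ↦
      det_permute σ (of fun i j ↦ u (e i) j)
    rw [← sum_perm_eq_sum_image_eq S he hJS, hf e he]
    calc ∑ σ : Equiv.Perm (Fin N), T (e ∘ σ)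
        = ∑ σ : Equiv.Perm (Fin N), (∏ m ∈ univ.image e, w m) * V e *
            (Equiv.Perm.sign σ * ∏ i, u (e (σ i)) i) :=
          sum_congr rfl fun σ _ ↦ by
            simp only [T, Function.comp_apply, prod_mul_distrib, hw, hV]
            ring
      _ = V e ^ 2 * ∏ m ∈ univ.image e, w m := by
          rw [← mul_sum, show ∑ σ : Equiv.Perm (Fin N), (Equiv.Perm.sign σ : R) *
            ∏ i, u (e (σ i)) i = V e from (det_apply' (of fun i j ↦ u (e i) j)).symm]
          ring
  calc _ = ∑ r ∈ Fintype.piFinset (fun _ ↦ S) with Injective r, T r := by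
        rw [expand, sum_filter_of_ne fun r _ h ↦ not_not.1 (mt (vanish r) h)]
    _ = ∑ J ∈ S.powersetCard N,
          ∑ r ∈ Fintype.piFinset (fun _ ↦ S) with Injective r ∧ univ.image r = J, T r := by
        simp_rw [← filter_filter]
        refine (sum_fiberwise_of_maps_to (fun r hr ↦ ?_) _).symm
        obtain ⟨hrS, hr⟩ := mem_filter.1 hr
        refine mem_powersetCard.2 ⟨fun m hm ↦ ?_, by simp [card_image_of_injective _ hr]⟩
        obtain ⟨k, -, rfl⟩ := mem_image.1 hm
        exact Fintype.mem_piFinset.1 hrS k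
    _ = _ := sum_congr rfl fiber

end CauchyBinet

section RowReduction

variable {R : Type*} [CommRing R] {N : ℕ}

theorem det_succ_eq_mul_det_of_clear_column_zero (A : Matrix (Fin (N + 1)) (Fin (N + 1)) R)
    (c : Fin N → R) (hc : ∀ i, A i.succ 0 + c i * A 0 0 = 0) :
    A.det = A 0 0 * (of fun i j : Fin N ↦ A i.succ j.succ + c i * A 0 j.succ).det := by
  set B : Matrix (Fin (N + 1)) (Fin (N + 1)) R :=
    of fun i j ↦ Fin.cases (A 0 j) (fun i ↦ A i.succ j + c i * A 0 j) i
  have hAB : B.det = A.det :=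
    det_eq_of_forall_row_eq_smul_add_const (Fin.cons 0 c) 0 rfl fun i j ↦ by
      cases i using Fin.cases <;> simp [B]
  rw [← hAB, det_succ_column_zero, Fin.sum_univ_succ]
  simp only [B, of_apply, Fin.cases_zero, Fin.cases_succ, hc, Fin.val_zero, pow_zero, one_mul,
    mul_zero, zero_mul, sum_const_zero, add_zero, Fin.succAbove_zero]
  rfl

theorem det_succ_eq_mul_det_schur {K : Type*} [Field K]
    (A : Matrix (Fin (N + 1)) (Fin (N + 1)) K) (h : A 0 0 ≠ 0) :
    A.det =
      A 0 0 * (of fun i j : Fin N ↦ A i.succ j.succ - A i.succ 0 / A 0 0 * A 0 j.succ).det := by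
  rw [det_succ_eq_mul_det_of_clear_column_zero A (fun i ↦ -(A i.succ 0 / A 0 0))
    fun i ↦ by field_simp; ring]
  simp only [neg_mul, ← sub_eq_add_neg]

theorem det_vecCons_one (a : Fin (N + 1) → Fin N → R) :
    (of fun i j ↦ vecCons 1 (a i) j).det = (of fun i j : Fin N ↦ a i.succ j - a 0 j).det := by
  rw [det_succ_eq_mul_det_of_clear_column_zero _ (fun _ ↦ -1) fun i ↦ by simp]
  simp [sub_eq_add_neg]

end RowReduction

section SimplexVolume

def cornerSimplex (n : ℕ) (s : ℝ) : Set (Fin n → ℝ) := {x | (∀ i, 0 ≤ x i) ∧ ∑ i, x i ≤ s}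

theorem cornerSimplex_eq_empty {n : ℕ} {s : ℝ} (hs : s < 0) : cornerSimplex n s = ∅ :=
  Set.eq_empty_of_forall_notMem fun _ ⟨h0, hs'⟩ ↦
    (hs'.trans_lt hs).not_ge (sum_nonneg fun i _ ↦ h0 i)

theorem cornerSimplex_succ (n : ℕ) (s : ℝ) :
    cornerSimplex (n + 1) s = MeasurableEquiv.piFinSuccAbove (fun _ ↦ ℝ) 0 ⁻¹'
      {q | 0 ≤ q.1 ∧ q.2 ∈ cornerSimplex n (s - q.1)} := by
  ext x
  simp [cornerSimplex, Fin.forall_fin_succ, Fin.sum_univ_succ, le_sub_iff_add_le', and_assoc,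
    Fin.tail_def]

theorem integral_sub_pow_div_factorial (n : ℕ) (s : ℝ) :
    ∫ t in (0 : ℝ)..s, (s - t) ^ n / n.factorial = s ^ (n + 1) / (n + 1).factorial := by
  rw [intervalIntegral.integral_comp_sub_left (fun x ↦ x ^ n / n.factorial), sub_self, sub_zero,
    intervalIntegral.integral_div, integral_pow, Nat.factorial_succ]
  push_cast
  field_simp
  ring

theorem volume_cornerSimplex (n : ℕ) {s : ℝ} (hs : 0 ≤ s) :
    volume (cornerSimplex n s) = ENNReal.ofReal (s ^ n / n.factorial) := by
  induction n generalizing s with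
  | zero =>
    have : cornerSimplex 0 s = Set.univ := Set.eq_univ_of_forall fun x ↦ by simp [cornerSimplex, hs]
    rw [this, volume_pi, Measure.pi_univ]
    simp
  | succ n ih =>
    set S : Set (ℝ × (Fin n → ℝ)) := {q | 0 ≤ q.1 ∧ q.2 ∈ cornerSimplex n (s - q.1)}
    have hS : MeasurableSet S := by
      simp only [S, cornerSimplex, Set.mem_ofPred_eq]
      measurability
    have slice : ∀ t, volume (Prod.mk t ⁻¹' S) =
        (Set.Icc 0 s).indicator (fun t ↦ ENNReal.ofReal ((s - t) ^ n / n.factorial)) t := by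
      intro t
      by_cases ht : t ∈ Set.Icc 0 s
      · have : Prod.mk t ⁻¹' S = cornerSimplex n (s - t) := by ext; simp [S, ht.1]
        rw [this, ih (sub_nonneg.2 ht.2), Set.indicator_of_mem ht]
      · have : Prod.mk t ⁻¹' S = ∅ := by
          ext y
          simp only [S, Set.mem_preimage, Set.mem_ofPred_eq, Set.mem_empty_iff_false, iff_false,
            not_and]
          intro h0
          rw [cornerSimplex_eq_empty (by simp_all)]
          exact id
        rw [this, Set.indicator_of_notMem ht, measure_empty]
    have hint : ∀ᵐ t ∂(volume.restrict (Set.Icc 0 s)), 0 ≤ (s - t) ^ n / n.factorial :=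
      ae_restrict_of_forall_mem measurableSet_Icc fun t ht ↦ by
        have := sub_nonneg.2 ht.2
        positivity
    rw [cornerSimplex_succ, (volume_preserving_piFinSuccAbove (fun _ ↦ ℝ) 0).measure_preimage
      hS.nullMeasurableSet, Measure.volume_eq_prod, Measure.prod_apply hS, lintegral_congr slice,
      lintegral_indicator measurableSet_Icc, ← ofReal_integral_eq_lintegral_ofReal
        (by fun_prop : Continuous fun t : ℝ ↦ (s - t) ^ n / n.factorial).integrableOn_Icc hint,
      integral_Icc_eq_integral_Ioc, ← intervalIntegral.integral_of_le hs,
      integral_sub_pow_div_factorial]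

theorem convex_cornerSimplex (n : ℕ) (s : ℝ) : Convex ℝ (cornerSimplex n s) := by
  rintro x ⟨hx0, hxs⟩ y ⟨hy0, hys⟩ a b ha hb hab
  refine ⟨fun i ↦ add_nonneg (mul_nonneg ha (hx0 i)) (mul_nonneg hb (hy0 i)), ?_⟩
  simp only [Pi.add_apply, Pi.smul_apply, smul_eq_mul, sum_add_distrib, ← mul_sum]
  calc a * ∑ i, x i + b * ∑ i, y i ≤ a * s + b * s :=
        add_le_add (mul_le_mul_of_nonneg_left hxs ha) (mul_le_mul_of_nonneg_left hys hb)
    _ = s := by rw [← add_mul, hab, one_mul]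

theorem convexHull_insert_zero_range_single (n : ℕ) :
    convexHull ℝ (insert 0 (Set.range fun j : Fin n ↦ Pi.single j (1 : ℝ))) =
      cornerSimplex n 1 := by
  refine subset_antisymm (convexHull_min ?_ (convex_cornerSimplex n 1)) fun x ⟨hx0, hx1⟩ ↦ ?_
  · rintro _ (rfl | ⟨j, rfl⟩)
    · exact ⟨fun _ ↦ le_rfl, by simp⟩
    · exact ⟨fun i ↦ by simp [Pi.single_apply]; positivity, by simp⟩
  · have hw : ∀ k ∈ univ, 0 ≤ (Fin.cons (1 - ∑ i, x i) x : Fin (n + 1) → ℝ) k := fun k _ ↦ by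
      cases k using Fin.cases
      · simpa using hx1
      · simpa using hx0 _
    have hmem := (convex_convexHull ℝ
      (insert 0 (Set.range fun j : Fin n ↦ Pi.single j (1 : ℝ)))).sum_mem hw
      (by simp [Fin.sum_univ_succ])
      (z := (Fin.cons 0 fun j ↦ Pi.single j 1 : Fin (n + 1) → Fin n → ℝ))
      fun k _ ↦ subset_convexHull ℝ _ (by cases k using Fin.cases <;> simp)
    simpa [Fin.sum_univ_succ, ← Pi.single_smul, Finset.univ_sum_single x] using hmem

theorem volume_convexHull_range {n : ℕ} (a : Fin (n + 1) → Fin n → ℝ) :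
    volume (convexHull ℝ (Set.range a)) =
      ENNReal.ofReal (|(of fun i j ↦ vecCons 1 (a i) j).det| / n.factorial) := by
  set M : Matrix (Fin n) (Fin n) ℝ := of fun k j ↦ a j.succ k - a 0 k
  have hrange : Set.range a =
      a 0 +ᵥ toLin' M '' insert 0 (Set.range fun j : Fin n ↦ Pi.single j (1 : ℝ)) := by
    have hcol : ∀ j, a 0 + M.col j = a j.succ := fun j ↦ by ext; simp [M]
    ext y
    simp [Set.image_insert_eq, Set.vadd_set_insert, ← Set.range_comp, Set.vadd_set_range,
      Fin.exists_fin_succ, hcol, eq_comm]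
  rw [hrange, convexHull_vadd, ← LinearMap.image_convexHull, convexHull_insert_zero_range_single,
    measure_vadd, Measure.addHaar_image_linearMap, LinearMap.det_toLin',
    volume_cornerSimplex n zero_le_one, det_vecCons_one, ← det_transpose,
    ← ENNReal.ofReal_mul (abs_nonneg _), one_pow, mul_one_div]
  rfl

end SimplexVolume

section LaurentPolynomial

variable {n : ℕ}

def homDop (i : Fin (n + 1)) : LP n → LP n := Fin.cases id Dop i

theorem intCast_mul_single {R G : Type*} [Ring R] [AddMonoid G] (k : ℤ) (m : G) (c : R) :
    (k : AddMonoidAlgebra R G) * AddMonoidAlgebra.single m c =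
      AddMonoidAlgebra.single m (k * c) := by
  rw [← zsmul_eq_mul, AddMonoidAlgebra.smul_single, zsmul_eq_mul]

theorem homDop_eq_finsuppSum (i : Fin (n + 1)) (q : LP n) :
    homDop i q = q.coeff.sum fun m c ↦ AddMonoidAlgebra.single m (vecCons (1 : ℤ) m i * c) := by
  cases i using Fin.cases with
  | zero => simp [homDop]
  | succ i => rfl

theorem homDop_eq_sum (i : Fin (n + 1)) (q : LP n) {S : Finset (Fin n → ℤ)}
    (hS : q.coeff.support ⊆ S) :
    homDop i q = ∑ m ∈ S, AddMonoidAlgebra.single m (vecCons (1 : ℤ) m i * q.coeff m) := by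
  rw [homDop_eq_finsuppSum, Finsupp.sum_of_support_subset _ hS]
  simp

theorem coeff_homDop (i : Fin (n + 1)) (q : LP n) (m : Fin n → ℤ) :
    (homDop i q).coeff m = vecCons (1 : ℤ) m i * q.coeff m := by
  rw [homDop_eq_sum i q (subset_insert m _), AddMonoidAlgebra.coeff_sum, Finsupp.finsetSum_apply,
    sum_eq_single_of_mem m (mem_insert_self _ _) fun m' _ hm' ↦ by simp [hm'],
    AddMonoidAlgebra.coeff_single, Finsupp.single_eq_same]

theorem homDop_homDop_eq_sum_smul_vecMulVec (p : LP n) :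
    (of fun i j ↦ homDop i (homDop j p)) = ∑ m ∈ p.coeff.support,
      AddMonoidAlgebra.single m (p.coeff m) •
        vecMulVec (fun i ↦ ((vecCons 1 m i : ℤ) : LP n))
          (fun i ↦ ((vecCons 1 m i : ℤ) : LP n)) := by
  refine Matrix.ext fun i j ↦ ?_
  have hsupp : (homDop j p).coeff.support ⊆ p.coeff.support :=
    fun m hm ↦ Finsupp.mem_support_iff.2 fun h ↦
      Finsupp.mem_support_iff.1 hm (by rw [coeff_homDop, h, mul_zero])
  rw [of_apply, homDop_eq_sum i _ hsupp, Matrix.sum_apply]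
  refine Finset.sum_congr rfl fun m _ ↦ ?_
  simp only [coeff_homDop, Matrix.smul_apply, vecMulVec_apply, smul_eq_mul]
  rw [← Int.cast_mul, mul_comm (AddMonoidAlgebra.single _ _), intCast_mul_single]
  congr 1
  push_cast
  ring

theorem pow_succ_mul_deltaOp {p : LP n} (hp : p ≠ 0) :
    algebraMap (LP n) (FractionRing (LP n)) p ^ (n + 1) * deltaOp p =
      algebraMap (LP n) (FractionRing (LP n)) (of fun i j ↦ homDop i (homDop j p)).det := by
  set P := algebraMap (LP n) (FractionRing (LP n)) p with hPdef
  have hP : P ≠ 0 := (map_ne_zero_iff _ (IsFractionRing.injective _ _)).2 hp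
  set B := (of fun i j ↦ homDop i (homDop j p)).map (algebraMap (LP n) (FractionRing (LP n)))
  have hB00 : B 0 0 = P := rfl
  have hδ : deltaOp p = P⁻¹ ^ n *
      (of fun i j : Fin n ↦ B i.succ j.succ - B i.succ 0 / B 0 0 * B 0 j.succ).det := by
    rw [deltaOp, show P⁻¹ ^ n = P⁻¹ ^ Fintype.card (Fin n) by simp, ← det_smul]
    congr 1
    ext i j
    simp only [Matrix.smul_apply, of_apply, smul_eq_mul, B, map_apply, homDop, Fin.cases_succ,
      Fin.cases_zero, id, map_sub, map_mul, ← hPdef]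
    field_simp
  rw [RingHom.map_det, hδ]
  change _ = B.det
  rw [det_succ_eq_mul_det_schur B (hB00 ▸ hP), hB00, pow_succ', mul_assoc, ← mul_assoc (P ^ n),
    ← mul_pow, mul_inv_cancel₀ hP, one_pow, one_mul]

end LaurentPolynomial

theorem factorial_mul_volume_convexHull_image_sq {n : ℕ} (e : Fin (n + 1) → Fin n → ℤ) :
    ((n.factorial : ℝ) *
        (volume (convexHull ℝ (emb '' (univ.image e : Set (Fin n → ℤ))))).toReal) ^ 2 =
      (((of fun i j ↦ vecCons 1 (e i) j).det : ℤ) : ℝ) ^ 2 := by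
  have hset : emb '' (univ.image e : Set (Fin n → ℤ)) = Set.range (emb ∘ e) := by
    simp [Set.range_comp]
  have hdet : (of fun i j ↦ vecCons 1 ((emb ∘ e) i) j).det =
      (((of fun i j ↦ vecCons 1 (e i) j).det : ℤ) : ℝ) := by
    rw [Int.cast_det]
    congr 1
    ext i j
    cases j using Fin.cases <;> simp [emb]
  rw [hset, volume_convexHull_range, hdet, ENNReal.toReal_ofReal (by positivity),
    mul_div_cancel₀ _ (by positivity), sq_abs]

/-- for a nonzero Laurent polynomial `p = Σ_j c_j χ^{m_j}`,
`p^{n+1}·det(D²log p) = Σ_J (n!·vol(conv{m_j : j∈J}))²·Π_{j∈J} c_j χ^{m_j}`,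
the sum running over all subsets `J` of the support of cardinality `n+1`,
where `vol` is the Lebesgue measure on `ℝ^n`. -/
theorem statement0 {n : ℕ} (p : LP n) (hp : p ≠ 0) :
    (algebraMap (LP n) (FractionRing (LP n)) p) ^ (n + 1) * deltaOp p =
      algebraMap (LP n) (FractionRing (LP n))
        (∑ J ∈ p.coeff.support.powersetCard (n + 1),
          (((n.factorial : ℝ) *
              (volume (convexHull ℝ (emb '' (J : Set (Fin n → ℤ))))).toReal) ^ 2 : ℝ) •
            ∏ m ∈ J, AddMonoidAlgebra.single m (p.coeff m)) := by
  rw [pow_succ_mul_deltaOp hp, homDop_homDop_eq_sum_smul_vecMulVec,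
    det_sum_smul_vecMulVec _ _ _ (fun J ↦ algebraMap ℝ (LP n)
      (((n.factorial : ℝ) * (volume (convexHull ℝ (emb '' (J : Set (Fin n → ℤ))))).toReal) ^ 2))
      fun e _ ↦ ?_]
  · simp only [Algebra.smul_def]
  · rw [factorial_mul_volume_convexHull_image_sq, map_pow, map_intCast, Int.cast_det]
    rfl
end
end

section
/- For p_FS = 1 + x_1 + ⋯ + x_n ∈ ℂ[x_1^{±1},…,x_n^{±1}], one has δ(p_FS) = (x_1⋯x_n)·p_FS^{−(n+1)}. -/
/-!
With `x_k = D_k p` for `p = 1 + x_1 + ⋯ + x_n`, the matrix `(D_i D_j log p)` is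
`p⁻² · diag(x) · (p · 1 - 𝟙 xᵀ)`, a diagonal matrix times a rank-one perturbation of a scalar
matrix. The matrix determinant lemma gives `det = p^{-2n} · ∏ x_i · p^n (1 - ∑ x_i / p)`,
and `p - ∑ x_i = 1`.
-/

noncomputable section

open Matrix in
/-- The matrix `(D_i D_j log p)` when `D_i p = x_i` and `D_i x_j = δ_ij x_j`. -/
theorem det_logHessian {ι K : Type*} [Fintype ι] [DecidableEq ι] [Field K]
    (x : ι → K) {p : K} (hp : p ≠ 0) :
    det (fun i j => x i * ((if i = j then p else 0) - x j) / p ^ 2) =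
      (∏ i, x i) * (p - ∑ i, x i) / p ^ (Fintype.card ι + 1) := by
  have hM : of (fun i j => x i * ((if i = j then p else 0) - x j) / p ^ 2) =
      (p ^ 2)⁻¹ • (diagonal x * (p • (1 + vecMulVec (fun _ => -p⁻¹) x))) := by
    ext i j
    simp only [of_apply, Matrix.smul_apply, diagonal_mul, Matrix.add_apply, one_apply,
      vecMulVec_apply, smul_eq_mul]
    split_ifs <;> field_simp <;> ring
  refine (congrArg det hM).trans ?_
  rw [det_smul, det_mul, det_diagonal, det_smul, vecMulVec_eq Unit,
    det_one_add_replicateCol_mul_replicateRow]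
  simp only [dotProduct, mul_neg, Finset.sum_neg_distrib, ← Finset.sum_mul, inv_pow, ← pow_mul]
  field_simp
  ring

def coordX {n : ℕ} (k : Fin n) : LP n := AddMonoidAlgebra.single (Pi.single k 1) 1

theorem Dop_single {n : ℕ} (i : Fin n) (m : Fin n → ℤ) (c : ℂ) :
    Dop i (AddMonoidAlgebra.single m c) = AddMonoidAlgebra.single m ((m i : ℂ) * c) :=
  Finsupp.sum_single_index (by simp)

theorem Dop_add {n : ℕ} (i : Fin n) (p q : LP n) : Dop i (p + q) = Dop i p + Dop i q :=
  Finsupp.sum_add_index (by simp) (by simp [mul_add])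

theorem Dop_sum {n : ℕ} {α : Type*} (i : Fin n) (s : Finset α) (f : α → LP n) :
    Dop i (∑ k ∈ s, f k) = ∑ k ∈ s, Dop i (f k) :=
  map_sum (AddMonoidHom.mk' (Dop i) (Dop_add i)) f s

theorem Dop_one {n : ℕ} (i : Fin n) : Dop i 1 = 0 := by
  simp [AddMonoidAlgebra.one_def, Dop_single]

theorem Dop_coordX {n : ℕ} (i k : Fin n) :
    Dop i (coordX k) = if i = k then coordX k else 0 := by
  rw [coordX, Dop_single, Pi.single_apply]
  split_ifs <;> simp

theorem Dop_one_add_sum_coordX {n : ℕ} (j : Fin n) :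
    Dop j (1 + ∑ k, coordX k) = coordX j := by
  simp [Dop_add, Dop_one, Dop_sum, Dop_coordX]

theorem one_add_sum_coordX_ne_zero {n : ℕ} : (1 + ∑ k, coordX k : LP n) ≠ 0 := by
  have hcoeff : (1 + ∑ k, coordX k : LP n).coeff 0 = 1 := by
    simp [coordX, AddMonoidAlgebra.one_def, AddMonoidAlgebra.coeff_sum, Pi.single_eq_zero_iff]
  intro h
  simp [h] at hcoeff

theorem deltaOp_one_add_sum_coordX {n : ℕ} :
    deltaOp (1 + ∑ k, coordX k : LP n) =
      algebraMap (LP n) (FractionRing (LP n)) (∏ k, coordX k) /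
        algebraMap (LP n) (FractionRing (LP n)) (1 + ∑ k, coordX k) ^ (n + 1) := by
  set p : LP n := 1 + ∑ k, coordX k with hp_def
  set φ := algebraMap (LP n) (FractionRing (LP n))
  have hp : φ p ≠ 0 :=
    (map_ne_zero_iff φ (IsFractionRing.injective _ _)).mpr one_add_sum_coordX_ne_zero
  have hentry : ∀ i j, φ (Dop i (Dop j p) * p - Dop i p * Dop j p) / φ p ^ 2 =
      φ (coordX i) * ((if i = j then φ p else 0) - φ (coordX j)) / φ p ^ 2 := by
    intro i j
    rw [Dop_one_add_sum_coordX, Dop_one_add_sum_coordX, Dop_coordX]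
    rcases eq_or_ne i j with rfl | h
    · simp only [↓reduceIte, map_sub, map_mul]
      ring
    · simp only [if_neg h, map_sub, map_mul, map_zero]
      ring
  have hsub : φ p - ∑ k, φ (coordX k) = 1 := by
    rw [hp_def, map_add, map_one, map_sum, add_sub_cancel_right]
  rw [deltaOp, congrArg Matrix.det (funext₂ hentry), det_logHessian _ hp, hsub, mul_one,
    map_prod, Fintype.card_fin]

/-- for `p_FS = 1 + x_1 + ⋯ + x_n`, one has
`δ(p_FS) = (x_1⋯x_n)·p_FS^{-(n+1)}`. -/
theorem statement5 {n : ℕ} :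
    deltaOp ((1 : LP n) + ∑ i : Fin n, AddMonoidAlgebra.single (Pi.single i 1) (1 : ℂ)) =
      algebraMap (LP n) (FractionRing (LP n))
          (∏ i : Fin n, AddMonoidAlgebra.single (Pi.single i 1) (1 : ℂ)) /
        (algebraMap (LP n) (FractionRing (LP n))
            ((1 : LP n) + ∑ i : Fin n, AddMonoidAlgebra.single (Pi.single i 1) (1 : ℂ))) ^
          (n + 1) :=
  deltaOp_one_add_sum_coordX

end
end

section
/- Let p ∈ ℂ[x_1^{±1},…,x_n^{±1}] have unimodular support. If NP(p) is a reflexive polytope then NP(μ(p)) = n·NP(p). -/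
open MeasureTheory
open scoped Pointwise

noncomputable section

/-- The pairing `⟨u, x⟩ = Σ_i u_i x_i` on `ℝ^n`. -/
def pairR {n : ℕ} (u x : Fin n → ℝ) : ℝ := ∑ i, u i * x i

/-- The Newton polytope of a Laurent polynomial: the convex hull of its
support. -/
def NP {n : ℕ} (p : LP n) : Set (Fin n → ℝ) :=
  convexHull ℝ (emb '' (p.coeff.support : Set (Fin n → ℤ)))

/-- The subset `C_σ` of points of `C` of minimal weight in the direction of a
cone (or any set) `σ`: `C_σ = {y ∈ C ∣ ⟨u, x−y⟩ ≥ 0 for all u ∈ σ, x ∈ C}`.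
For a polytope `C` this is the face of `C` in the direction of `σ`. -/
def faceIn {n : ℕ} (σ : Set (Fin n → ℝ)) (C : Set (Fin n → ℝ)) : Set (Fin n → ℝ) :=
  {y ∈ C | ∀ u ∈ σ, ∀ x ∈ C, pairR u y ≤ pairR u x}

/-- The normal cone `σ_v` of a polytope `Δ` at a point `v`. -/
def normalCone {n : ℕ} (Δ : Set (Fin n → ℝ)) (v : Fin n → ℝ) : Set (Fin n → ℝ) :=
  {u | ∀ x ∈ Δ, pairR u v ≤ pairR u x}

/-- An edge of a polytope: an exposed face whose affine span has dimension 1. -/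
def IsEdgeOf {n : ℕ} (Δ E : Set (Fin n → ℝ)) : Prop :=
  IsExposed ℝ Δ E ∧ Module.finrank ℝ (affineSpan ℝ E).direction = 1

/-- A Laurent polynomial has unimodular support if for every vertex `v` of its
Newton polytope there is a choice, for every edge `E` of the Newton polytope
containing `v`, of a point `w_E` of the support lying on `E` such that the
vectors `w_E − v` form a basis of the lattice `ℤ^n`. -/
def UnimodularSupport {n : ℕ} (p : LP n) : Prop :=
  ∀ v : Fin n → ℤ, emb v ∈ Set.extremePoints ℝ (NP p) →
    ∃ w : {E : Set (Fin n → ℝ) // IsEdgeOf (NP p) E ∧ emb v ∈ E} → (Fin n → ℤ),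
      (∀ E, w E ∈ p.coeff.support ∧ emb (w E) ∈ E.1) ∧
      LinearIndependent ℤ (fun E => w E - v) ∧
      Submodule.span ℤ (Set.range fun E => w E - v) = ⊤

/-- The Monge–Ampère polynomial
`μ(p) = p^{n+1}·δ(p) = Σ_J (n!·vol(conv{m_j : j∈J}))²·Π_{j∈J} c_j χ^{m_j}`,
the sum running over the subsets `J` of the support of `p` of cardinality
`n+1`, where `vol` is the Lebesgue measure on `ℝ^n`. -/
def muPoly {n : ℕ} (p : LP n) : LP n :=
  ∑ J ∈ p.coeff.support.powersetCard (n + 1),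
    (((n.factorial : ℝ) *
        (volume (convexHull ℝ (emb '' (J : Set (Fin n → ℤ))))).toReal) ^ 2 : ℝ) •
      ∏ m ∈ J, AddMonoidAlgebra.single m (p.coeff m)

open scoped Classical in
/-- The restriction `p|_S` of a Laurent polynomial to a subset `S ⊆ ℝ^n`: the
sum of the terms of `p` whose exponents lie in `S`. -/
def restrictTo {n : ℕ} (p : LP n) (S : Set (Fin n → ℝ)) : LP n :=
  ∑ m ∈ p.coeff.support, if emb m ∈ S then AddMonoidAlgebra.single m (p.coeff m) else 0

/-- A lattice vector is primitive if the gcd of its coordinates is `1`. -/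
def IsPrimitive {n : ℕ} (u : Fin n → ℤ) : Prop := Finset.univ.gcd u = 1

/-- The adjacent polytope of a face `F` of `Δ` with primitive inner normal
vector `u`: the set `{x ∈ Δ ∣ ⟨u, x−y⟩ = 1 for all y ∈ F}`, i.e. the
intersection of `Δ` with the inner parallel lattice hyperplane closest
to `F`. -/
def adjacentPolytope {n : ℕ} (Δ F : Set (Fin n → ℝ)) (u : Fin n → ℝ) :
    Set (Fin n → ℝ) :=
  {x ∈ Δ | ∀ y ∈ F, pairR u x - pairR u y = 1}

/-- The lattice length of a lattice segment: the number of lattice points on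
it minus `1`. -/
def latLen {n : ℕ} (S : Set (Fin n → ℝ)) : ℕ :=
  {m : Fin n → ℤ | emb m ∈ S}.ncard - 1

/-!
Every exponent of `μ(p)` is the sum of `n + 1` support points spanning `ℝ^n`; they cannot all
lie on a facet hyperplane `⟨u_k, ·⟩ = -1`, so the sum satisfies `⟨u_k, ·⟩ ≥ -n`, i.e. it lies in
`n • NP(p)`. Conversely let `v` be a vertex with unimodular edge basis `b`. The cone of `NP(p)` at
`v` is spanned by its edges, so the support lies in `v + ℕ b`; and reflexivity forces every
`b`-coordinate of `v` to be `-1`, because the facet through `v` and the `v + b j`, `j ≠ i`, has a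
primitive normal which must be the `i`-th coordinate functional. Hence `{v, v + b 1, …, v + b n}`
is the only `(n + 1)`-subset of the support with sum `n • v`, the coefficient of `χ^{n v}` in
`μ(p)` is a single nonzero term, and `n • v ∈ NP(μ(p))`.
-/

section ConvexGeometry

open Module Topology

variable {E : Type*} [NormedAddCommGroup E] [NormedSpace ℝ E]

theorem Set.Finite.convexHull_extremePoints_convexHull {T : Set E} (hT : T.Finite) :
    convexHull ℝ ((convexHull ℝ T).extremePoints ℝ) = convexHull ℝ T := by
  have hext : ((convexHull ℝ T).extremePoints ℝ).Finite :=
    hT.subset extremePoints_convexHull_subset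
  simpa [(hext.isCompact_convexHull ℝ).isClosed.closure_eq] using
    closure_convexHull_extremePoints (hT.isCompact_convexHull ℝ) (convex_convexHull ℝ T)

theorem Set.Finite.exists_clm_lt_of_mem_extremePoints {T : Set E} (hT : T.Finite) {q : E}
    (hq : q ∈ (convexHull ℝ T).extremePoints ℝ) : ∃ f : E →L[ℝ] ℝ, ∀ t ∈ T, t ≠ q → f t < f q := by
  have hq' : q ∉ convexHull ℝ (T \ {q}) := fun h =>
    (extremePoints_convexHull_subset (inter_extremePoints_subset_extremePoints_of_subset
      (convexHull_mono Set.sdiff_subset) ⟨h, hq⟩)).2 rfl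
  obtain ⟨f, c, hfc, hcq⟩ := geometric_hahn_banach_closed_point (convex_convexHull ℝ _)
    ((hT.subset Set.sdiff_subset).isCompact_convexHull ℝ).isClosed hq'
  exact ⟨f, fun t ht htq => (hfc t (subset_convexHull ℝ _ ⟨ht, htq⟩)).trans hcq⟩

theorem IsExposed.subset_of_inter_subset [FiniteDimensional ℝ E] {T F : Set E} (hT : T.Finite)
    (hF : IsExposed ℝ (convexHull ℝ T) F) {A : AffineSubspace ℝ E} (hA : T ∩ F ⊆ A) :
    F ⊆ A := by
  rw [← closure_convexHull_extremePoints (hF.isCompact (hT.isCompact_convexHull ℝ))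
    (hF.convex (convex_convexHull ℝ T))]
  refine closure_minimal (convexHull_min (fun x hx => hA ⟨?_, extremePoints_subset hx⟩)
    A.convex) A.closed_of_finiteDimensional
  exact extremePoints_convexHull_subset (hF.isExtreme.extremePoints_subset_extremePoints hx)

theorem finrank_direction_affineSpan_eq_one {F : Set E} {v w : E} (hv : v ∈ F) (hw : w ∈ F)
    (hne : w ≠ v) (hF : F ⊆ AffineSubspace.mk' v (ℝ ∙ (w - v))) :
    finrank ℝ (affineSpan ℝ F).direction = 1 := by
  have hle : (affineSpan ℝ F).direction ≤ ℝ ∙ (w - v) := by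
    simpa using AffineSubspace.direction_le (affineSpan_le.mpr hF)
  have hge : ℝ ∙ (w - v) ≤ (affineSpan ℝ F).direction :=
    (Submodule.span_singleton_le_iff_mem _ _).mpr
      (AffineSubspace.vsub_mem_direction (subset_affineSpan ℝ F hw) (subset_affineSpan ℝ F hv))
  rw [le_antisymm hle hge, finrank_span_singleton (sub_ne_zero.mpr hne)]

theorem exists_edge_of_isMaxOn {S : Set E} [FiniteDimensional ℝ E] (hS : S.Finite) {v s₀ : E}
    (hv : v ∈ S) (hs₀ : s₀ ∈ S) (hne : s₀ ≠ v) (h : E →L[ℝ] ℝ) (hmax : ∀ s ∈ S, h s ≤ h v)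
    (hs₀v : h s₀ = h v) (hline : ∀ s ∈ S, h s = h v → s - v ∈ ℝ ∙ (s₀ - v)) :
    ∃ F, IsExposed ℝ (convexHull ℝ S) F ∧ finrank ℝ (affineSpan ℝ F).direction = 1 ∧ v ∈ F ∧
      F ⊆ AffineSubspace.mk' v (ℝ ∙ (s₀ - v)) := by
  have hmax' : ∀ x ∈ convexHull ℝ S, h x ≤ h v := fun x hx =>
    convexHull_min hmax (convex_halfSpace_le h.toLinearMap.isLinear _) hx
  have hmem : ∀ x ∈ S, h x = h v → x ∈ h.toExposed (convexHull ℝ S) := fun x hx hxv =>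
    ⟨subset_convexHull ℝ S hx, fun y hy => hxv ▸ hmax' y hy⟩
  have hsub : h.toExposed (convexHull ℝ S) ⊆ AffineSubspace.mk' v (ℝ ∙ (s₀ - v)) :=
    IsExposed.subset_of_inter_subset hS (fun _ => ⟨h, rfl⟩) fun x ⟨hxS, hxF⟩ =>
      AffineSubspace.mem_mk'.mpr (hline x hxS
        (le_antisymm (hmax x hxS) (hxF.2 v (subset_convexHull ℝ S hv))))
  exact ⟨_, fun _ => ⟨h, rfl⟩, finrank_direction_affineSpan_eq_one (hmem v hv rfl)
    (hmem s₀ hs₀ hs₀v) hne hsub, hmem v hv rfl, hsub⟩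

/-- The section of the cone spanned by `S - v` with the hyperplane `ℓ = 1`. -/
def coneSection (ℓ : E →L[ℝ] ℝ) (v : E) (S : Set E) : Set E :=
  (fun s => (ℓ (s - v))⁻¹ • (s - v)) '' (S \ {v})

theorem exists_clm_of_mem_extremePoints_coneSection {S : Set E} (hS : S.Finite) {v : E}
    {ℓ : E →L[ℝ] ℝ} (hℓ : ∀ s ∈ S, s ≠ v → 0 < ℓ (s - v)) {s₀ : E} (hs₀ : s₀ ∈ S) (hs₀v : s₀ ≠ v)
    (hext : (ℓ (s₀ - v))⁻¹ • (s₀ - v) ∈ (convexHull ℝ (coneSection ℓ v S)).extremePoints ℝ) :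
    ∃ h : E →L[ℝ] ℝ, (∀ s ∈ S, h s ≤ h v) ∧ h s₀ = h v ∧
      ∀ s ∈ S, h s = h v → s - v ∈ ℝ ∙ (s₀ - v) := by
  set N : E → E := fun s => (ℓ (s - v))⁻¹ • (s - v)
  have hN : ∀ s ∈ S, s ≠ v → s - v = ℓ (s - v) • N s := fun s hs hsv =>
    (smul_inv_smul₀ (hℓ s hs hsv).ne' _).symm
  have hℓN : ∀ s ∈ S, s ≠ v → ℓ (N s) = 1 := fun s hs hsv => by
    simp only [N, map_smul, smul_eq_mul, inv_mul_cancel₀ (hℓ s hs hsv).ne']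
  obtain ⟨g, hg⟩ := (hS.sdiff.image N).exists_clm_lt_of_mem_extremePoints hext
  have hgN : ∀ s ∈ S, s ≠ v → N s ≠ N s₀ → g (N s) < g (N s₀) := fun s hs hsv =>
    hg _ ⟨s, ⟨hs, hsv⟩, rfl⟩
  set h : E →L[ℝ] ℝ := g - g (N s₀) • ℓ
  have hh : ∀ s ∈ S, s ≠ v → h s - h v = ℓ (s - v) * (g (N s) - g (N s₀)) := fun s hs hsv => by
    rw [← map_sub, hN s hs hsv]
    simp only [h, map_smul, sub_apply, smul_apply, smul_eq_mul, hℓN s hs hsv]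
    ring
  refine ⟨h, fun s hs => ?_, by linarith [hh s₀ hs₀ hs₀v], fun s hs hsv' => ?_⟩
  · rcases eq_or_ne s v with rfl | hsv
    · rfl
    have hgs : g (N s) ≤ g (N s₀) := by
      by_cases hNs : N s = N s₀
      · rw [hNs]
      · exact (hgN s hs hsv hNs).le
    nlinarith [hh s hs hsv, hℓ s hs hsv]
  · rcases eq_or_ne s v with rfl | hsv
    · simp
    have hNs : N s = N s₀ := by
      by_contra hne
      nlinarith [hh s hs hsv, hℓ s hs hsv, hgN s hs hsv hne]
    rw [hN s hs hsv, hNs]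
    exact Submodule.smul_mem _ _ (Submodule.smul_mem _ _ (Submodule.mem_span_singleton_self _))

theorem map_sub_nonneg_of_mem_extremePoints_coneSection [FiniteDimensional ℝ E] {S : Set E}
    (hS : S.Finite) {v : E} (hv : v ∈ S) {ℓ : E →L[ℝ] ℝ} (hℓ : ∀ s ∈ S, s ≠ v → 0 < ℓ (s - v))
    (φ : E →L[ℝ] ℝ) (hφ : ∀ F, IsExposed ℝ (convexHull ℝ S) F →
      finrank ℝ (affineSpan ℝ F).direction = 1 → v ∈ F → ∃ w ∈ F, w ≠ v ∧ 0 ≤ φ (w - v))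
    {s₀ : E} (hs₀ : s₀ ∈ S) (hs₀v : s₀ ≠ v)
    (hext : (ℓ (s₀ - v))⁻¹ • (s₀ - v) ∈ (convexHull ℝ (coneSection ℓ v S)).extremePoints ℝ) :
    0 ≤ φ (s₀ - v) := by
  obtain ⟨h, hmax, hs₀max, hline⟩ :=
    exists_clm_of_mem_extremePoints_coneSection hS hℓ hs₀ hs₀v hext
  obtain ⟨F, hF, hF1, hvF, hFline⟩ := exists_edge_of_isMaxOn hS hv hs₀ hs₀v h hmax hs₀max hline
  obtain ⟨w, hwF, hwv, hφw⟩ := hφ F hF hF1 hvF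
  obtain ⟨c, hc⟩ := Submodule.mem_span_singleton.mp (AffineSubspace.mem_mk'.mp (hFline hwF))
  have hℓw : 0 ≤ ℓ (w - v) := by
    have hℓS : ∀ s ∈ S, ℓ v ≤ ℓ s := fun s hs => by
      rcases eq_or_ne s v with rfl | hsv
      · rfl
      · linarith [hℓ s hs hsv, map_sub ℓ s v]
    have : ℓ v ≤ ℓ w :=
      convexHull_min hℓS (convex_halfSpace_ge ℓ.toLinearMap.isLinear _) (hF.subset hwF)
    rw [map_sub]
    linarith
  rw [vsub_eq_sub] at hc
  rw [← hc, map_smul, smul_eq_mul] at hℓw hφw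
  have hc0 : 0 < c := by
    refine lt_of_le_of_ne (nonneg_of_mul_nonneg_left hℓw (hℓ s₀ hs₀ hs₀v)) ?_
    rintro rfl
    exact hwv (sub_eq_zero.mp (by rw [← hc, zero_smul]))
  exact nonneg_of_mul_nonneg_right hφw hc0

theorem map_sub_nonneg_of_forall_edge [FiniteDimensional ℝ E] {S : Set E} (hS : S.Finite) {v : E}
    (hv : v ∈ (convexHull ℝ S).extremePoints ℝ) (φ : E →L[ℝ] ℝ)
    (hφ : ∀ F, IsExposed ℝ (convexHull ℝ S) F →
      finrank ℝ (affineSpan ℝ F).direction = 1 → v ∈ F → ∃ w ∈ F, w ≠ v ∧ 0 ≤ φ (w - v))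
    {s : E} (hs : s ∈ S) : 0 ≤ φ (s - v) := by
  obtain ⟨f, hf⟩ := hS.exists_clm_lt_of_mem_extremePoints hv
  have hℓ : ∀ s ∈ S, s ≠ v → 0 < (-f) (s - v) := fun s hs hsv => by
    simp only [neg_apply, map_sub]
    linarith [hf s hs hsv]
  have hT : ∀ t ∈ (convexHull ℝ (coneSection (-f) v S)).extremePoints ℝ, 0 ≤ φ t := by
    intro t ht
    obtain ⟨s₀, ⟨hs₀, hs₀v⟩, rfl⟩ := extremePoints_convexHull_subset ht
    rw [map_smul, smul_eq_mul]
    exact mul_nonneg (inv_nonneg.mpr (hℓ _ hs₀ hs₀v).le)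
      (map_sub_nonneg_of_mem_extremePoints_coneSection hS (extremePoints_convexHull_subset hv)
        hℓ φ hφ hs₀ hs₀v ht)
  rcases eq_or_ne s v with rfl | hsv
  · simp
  have hmem : ((-f) (s - v))⁻¹ • (s - v) ∈
      convexHull ℝ ((convexHull ℝ (coneSection (-f) v S)).extremePoints ℝ) := by
    have hfin : (coneSection (-f) v S).Finite := hS.sdiff.image _
    rw [hfin.convexHull_extremePoints_convexHull]
    exact subset_convexHull ℝ _ ⟨s, ⟨hs, hsv⟩, rfl⟩
  have := convexHull_min hT (convex_halfSpace_ge φ.toLinearMap.isLinear 0) hmem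
  rw [← smul_inv_smul₀ (hℓ s hs hsv).ne' (s - v), map_smul, smul_eq_mul]
  exact mul_nonneg (hℓ s hs hsv).le this

theorem addHaar_convexHull_ne_zero_iff [FiniteDimensional ℝ E] [MeasurableSpace E] [BorelSpace E]
    (μ : Measure E) [μ.IsAddHaarMeasure] (T : Set E) :
    μ (convexHull ℝ T) ≠ 0 ↔ affineSpan ℝ T = ⊤ := by
  refine ⟨fun h => by_contra fun htop => h (measure_mono_null (convexHull_subset_affineSpan T)
    (Measure.addHaar_affineSubspace μ _ htop)), fun h => ?_⟩
  have hint : (interior (convexHull ℝ T)).Nonempty := by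
    rwa [(convex_convexHull ℝ T).interior_nonempty_iff_affineSpan_eq_top, affineSpan_convexHull]
  exact ((isOpen_interior.measure_pos μ hint).trans_le (measure_mono interior_subset)).ne'

/-- The tight inequality is found at the barycentre of the `y j`: were none tight there, it would
be an interior minimum of `φ`. -/
theorem exists_forall_eq_of_isMinOn {ι κ : Type*} [Finite ι] [Fintype κ] [Nonempty κ]
    {f : ι → E →L[ℝ] ℝ} {a : ι → ℝ} {φ : E →L[ℝ] ℝ} (hφ : φ ≠ 0) {y : κ → E}
    (hy : ∀ j, y j ∈ {x | ∀ k, a k ≤ f k x})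
    (hmin : ∀ j, IsMinOn φ {x | ∀ k, a k ≤ f k x} (y j)) :
    ∃ k, ∀ j, f k (y j) = a k := by
  set P := {x | ∀ k, a k ≤ f k x}
  set w : ℝ := (Fintype.card κ : ℝ)⁻¹
  have hw : 0 < w := inv_pos.mpr (Nat.cast_pos.mpr Fintype.card_pos)
  have hwsum : ∑ _j : κ, w = 1 := by
    rw [Finset.sum_const, Finset.card_univ, nsmul_eq_mul]
    exact mul_inv_cancel₀ (Nat.cast_ne_zero.mpr Fintype.card_ne_zero)
  have hP : Convex ℝ P := by
    simp only [P, Set.ofPred_forall]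
    exact convex_iInter fun k => convex_halfSpace_ge (f k).toLinearMap.isLinear _
  set x₀ := ∑ j, w • y j
  have hx₀ : x₀ ∈ P := hP.sum_mem (fun _ _ => hw.le) hwsum fun j _ => hy j
  have hmap : ∀ g : E →L[ℝ] ℝ, g x₀ = ∑ j, w * g (y j) := fun g => by simp [x₀, map_sum]
  have hx₀min : IsMinOn φ P x₀ := isMinOn_iff.mpr fun z hz => by
    rw [hmap]
    calc ∑ j, w * φ (y j) ≤ ∑ _j : κ, w * φ z := Finset.sum_le_sum fun j _ =>
          mul_le_mul_of_nonneg_left (isMinOn_iff.mp (hmin j) z hz) hw.le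
      _ = φ z := by rw [← Finset.sum_mul, hwsum, one_mul]
  obtain ⟨k, hk⟩ : ∃ k, f k x₀ = a k := by
    by_contra! h
    have hnhds : P ∈ 𝓝 x₀ := Filter.mem_of_superset
      (Filter.eventually_all.2 fun k => (f k).continuous.continuousAt.eventually
        (lt_mem_nhds ((hx₀ k).lt_of_ne (h k).symm))) fun x (hx : ∀ k, a k < f k x) k => (hx k).le
    exact hφ ((hx₀min.isLocalMin hnhds).hasFDerivAt_eq_zero φ.hasFDerivAt)
  have havg : ∑ _j : κ, w * a k = ∑ j, w * f k (y j) := by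
    rw [← Finset.sum_mul, hwsum, one_mul, ← hk, hmap]
  refine ⟨k, fun j => ?_⟩
  have := (Finset.sum_eq_sum_iff_of_le fun j _ => mul_le_mul_of_nonneg_left (hy j k) hw.le).mp
    havg j (Finset.mem_univ j)
  exact (mul_left_cancel₀ hw.ne' this).symm

end ConvexGeometry

section Lattice

variable {n : ℕ}

theorem emb_add (a b : Fin n → ℤ) : emb (a + b) = emb a + emb b := by ext; simp [emb]

theorem emb_sub (a b : Fin n → ℤ) : emb (a - b) = emb a - emb b := by ext; simp [emb]

theorem emb_nsmul (k : ℕ) (a : Fin n → ℤ) : emb (k • a) = (k : ℝ) • emb a := by ext; simp [emb]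

theorem emb_injective : Function.Injective (emb (n := n)) := fun a b h => by
  ext i; exact Int.cast_injective (α := ℝ) (congrFun h i)

theorem pairR_emb_emb (u m : Fin n → ℤ) : pairR (emb u) (emb m) = ((u ⬝ᵥ m : ℤ) : ℝ) := by
  simp [pairR, emb, dotProduct]

def embLinearMap (n : ℕ) : (Fin n → ℤ) →ₗ[ℤ] (Fin n → ℝ) :=
  (Int.castAddHom ℝ).toIntLinearMap.compLeft (Fin n)

def pairRCLM (u : Fin n → ℝ) : (Fin n → ℝ) →L[ℝ] ℝ :=
  LinearMap.toContinuousLinearMap (dotProductEquiv ℝ (Fin n) u)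

@[simp] theorem pairRCLM_apply (u x : Fin n → ℝ) : pairRCLM u x = pairR u x := rfl

/-- The `i`-th coordinate functional of a lattice basis, extended to `ℝ^n`. -/
def coordCLM {κ : Type*} (b : Module.Basis κ ℤ (Fin n → ℤ)) (i : κ) : (Fin n → ℝ) →L[ℝ] ℝ :=
  pairRCLM (emb ((dotProductEquiv ℤ (Fin n)).symm (b.coord i)))

theorem coordCLM_emb {κ : Type*} (b : Module.Basis κ ℤ (Fin n → ℤ)) (i : κ) (x : Fin n → ℤ) :
    coordCLM b i (emb x) = b.repr x i := by
  rw [coordCLM, pairRCLM_apply, pairR_emb_emb, ← dotProductEquiv_apply_apply,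
    LinearEquiv.apply_symm_apply, Module.Basis.coord_apply]

theorem affineSpan_eq_top_of_basis {κ : Type*} (b : Module.Basis κ ℤ (Fin n → ℤ))
    {v : Fin n → ℤ} {T : Set (Fin n → ℝ)} (hv : emb v ∈ T) (hb : ∀ i, emb (v + b i) ∈ T) :
    affineSpan ℝ T = ⊤ := by
  set D := (affineSpan ℝ T).direction
  have hbD : ∀ i, emb (b i) ∈ D := fun i => by
    simpa [emb_add] using AffineSubspace.vsub_mem_direction (subset_affineSpan ℝ T (hb i))
      (subset_affineSpan ℝ T hv)
  have hembD : ∀ x, emb x ∈ D := by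
    have : Submodule.span ℤ (Set.range b) ≤ (D.restrictScalars ℤ).comap (embLinearMap n) :=
      Submodule.span_le.mpr (by rintro _ ⟨i, rfl⟩; exact hbD i)
    rw [b.span_eq] at this
    exact fun x => this Submodule.mem_top
  have hD : D = ⊤ := Submodule.eq_top_iff'.mpr fun y => by
    rw [pi_eq_sum_univ y]
    refine Submodule.sum_mem _ fun j _ => Submodule.smul_mem _ _ ?_
    convert hembD fun k => if j = k then 1 else 0 using 1
    ext k; simp [emb, apply_ite]
  exact (AffineSubspace.direction_eq_top_iff_of_nonempty ⟨_, subset_affineSpan ℝ T hv⟩).mp hD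

end Lattice

theorem Finsupp.exists_eq_single_of_sum_eq_one {ι : Type*} [Fintype ι] {f : ι →₀ ℤ}
    (hf : ∀ i, 0 ≤ f i) (h : ∑ i, f i = 1) : ∃ i, f = Finsupp.single i 1 := by
  classical
  obtain ⟨i, -, hi⟩ := Finset.exists_ne_zero_of_sum_ne_zero (h.trans_ne one_ne_zero)
  have hle : f i ≤ 1 := h ▸ Finset.single_le_sum (fun j _ => hf j) (Finset.mem_univ i)
  refine ⟨i, Finsupp.ext fun j => ?_⟩
  have := hf i
  rcases eq_or_ne i j with rfl | hij
  · simp only [Finsupp.single_eq_same]; lia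
  · have := Finset.add_le_sum (fun k _ => hf k) (Finset.mem_univ i) (Finset.mem_univ j) hij
    have := hf j
    rw [Finsupp.single_apply, if_neg hij]; lia

theorem Finset.mem_and_eq_one_of_sum_add_one_eq_card {α : Type*} [DecidableEq α] {J : Finset α}
    {v : α} {s : α → ℤ} (hv : s v = 0) (hpos : ∀ m ∈ J, m ≠ v → 1 ≤ s m)
    (hsum : ∑ m ∈ J, s m + 1 = J.card) : v ∈ J ∧ ∀ m ∈ J, m ≠ v → s m = 1 := by
  have hvJ : v ∈ J := by
    by_contra hvJ
    have := Finset.card_nsmul_le_sum J s 1 fun m hm => hpos m hm (ne_of_mem_of_not_mem hm hvJ)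
    simp only [nsmul_eq_mul, mul_one] at this
    lia
  refine ⟨hvJ, fun m hm hmv => ?_⟩
  have heq : ∑ m ∈ J.erase v, (1 : ℤ) = ∑ m ∈ J.erase v, s m := by
    rw [Finset.sum_erase_eq_sub hvJ, Finset.sum_erase_eq_sub hvJ, hv, Finset.sum_const]
    simp only [nsmul_eq_mul, mul_one]
    lia
  exact ((Finset.sum_eq_sum_iff_of_le fun m hm => hpos m (Finset.mem_of_mem_erase hm)
    (Finset.ne_of_mem_erase hm)).mp heq m (Finset.mem_erase.mpr ⟨hmv, hm⟩)).symm

theorem Module.Basis.eq_insert_image_of_sum_sub_eq {ι M : Type*} [Fintype ι] [AddCommGroup M]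
    [DecidableEq M] (b : Module.Basis ι ℤ M) {v : M} {J : Finset M}
    (hJ : ∀ m ∈ J, ∀ i, 0 ≤ b.repr (m - v) i) (hcard : J.card = Fintype.card ι + 1)
    (hsum : ∑ m ∈ J, (m - v) = ∑ i, b i) :
    J = insert v (Finset.univ.image fun i => v + b i) := by
  -- `s m` is the lattice height of `m` over `v`; the heights over `J` add up to `card ι`
  set s : M → ℤ := fun m => ∑ i, b.repr (m - v) i
  have hs_pos : ∀ m ∈ J, m ≠ v → 1 ≤ s m := fun m hm hmv => by
    by_contra! hlt
    have hzero := (Finset.sum_eq_zero_iff_of_nonneg fun i _ => hJ m hm i).mp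
      (le_antisymm (show s m ≤ 0 by lia) (Finset.sum_nonneg fun i _ => hJ m hm i))
    exact hmv (sub_eq_zero.mp (b.repr.map_eq_zero_iff.mp
      (Finsupp.ext fun i => hzero i (Finset.mem_univ i))))
  have htotal : ∑ m ∈ J, s m = Fintype.card ι := by
    have hcol : ∀ i, ∑ m ∈ J, b.repr (m - v) i = 1 := fun i => by
      rw [← Finsupp.finsetSum_apply, ← map_sum, hsum, map_sum]
      simp [Finsupp.finsetSum_apply]
    simp only [s]
    rw [Finset.sum_comm, Finset.sum_congr rfl fun i _ => hcol i]
    simp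
  obtain ⟨hvJ, hone⟩ := Finset.mem_and_eq_one_of_sum_add_one_eq_card (by simp [s]) hs_pos
    (by rw [htotal, hcard]; push_cast; ring)
  have hsub : J ⊆ insert v (Finset.univ.image fun i => v + b i) := by
    intro m hm
    rcases eq_or_ne m v with rfl | hmv
    · exact Finset.mem_insert_self _ _
    obtain ⟨i, hi⟩ := Finsupp.exists_eq_single_of_sum_eq_one (hJ m hm)
      (hone m hm hmv)
    rw [← b.repr_self, b.repr.injective.eq_iff] at hi
    exact Finset.mem_insert_of_mem (Finset.mem_image.mpr ⟨i, Finset.mem_univ _, by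
      rw [← hi, add_sub_cancel]⟩)
  refine Finset.eq_of_subset_of_card_le hsub ?_
  calc _ ≤ (Finset.univ.image fun i => v + b i).card + 1 := Finset.card_insert_le _ _
    _ ≤ J.card := by
      have := Finset.card_image_le (s := Finset.univ) (f := fun i => v + b i)
      rw [Finset.card_univ] at this
      lia

section NewtonPolytope

variable {n : ℕ}

theorem IsPrimitive.dotProduct_eq_repr {κ : Type*} [Fintype κ] {u : Fin n → ℤ}
    (hu : IsPrimitive u) (b : Module.Basis κ ℤ (Fin n → ℤ)) {i : κ} (hi : 0 ≤ u ⬝ᵥ b i)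
    (hj : ∀ j ≠ i, u ⬝ᵥ b j = 0) (x : Fin n → ℤ) : u ⬝ᵥ x = b.repr x i := by
  have hlin : ∀ x, u ⬝ᵥ x = (u ⬝ᵥ b i) * b.repr x i := fun x => by
    conv_lhs => rw [← b.sum_repr x]
    rw [dotProduct_sum, Finset.sum_eq_single i (fun j _ hji => by rw [dotProduct_smul, hj j hji,
      smul_zero]) (by simp), dotProduct_smul, smul_eq_mul, mul_comm]
  have hdvd : u ⬝ᵥ b i ∣ Finset.univ.gcd u := Finset.dvd_gcd fun j _ =>
    ⟨b.repr (Pi.single j 1) i, by rw [← hlin, dotProduct_single_one]⟩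
  rw [show Finset.univ.gcd u = 1 from hu] at hdvd
  rw [hlin, Int.eq_one_of_dvd_one hi hdvd, one_mul]

def normVol (J : Finset (Fin n → ℤ)) : ℝ :=
  n.factorial * (volume (convexHull ℝ (emb '' (J : Set (Fin n → ℤ))))).toReal

theorem normVol_ne_zero_iff (J : Finset (Fin n → ℤ)) :
    normVol J ≠ 0 ↔ affineSpan ℝ (emb '' (J : Set (Fin n → ℤ))) = ⊤ := by
  have hfin : volume (convexHull ℝ (emb '' (J : Set (Fin n → ℤ)))) ≠ ⊤ :=
    ((J.finite_toSet.image emb).isCompact_convexHull ℝ).measure_lt_top.ne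
  rw [normVol, mul_ne_zero_iff, ENNReal.toReal_ne_zero, addHaar_convexHull_ne_zero_iff]
  simp [hfin, n.factorial_ne_zero]

theorem coeff_muPoly (p : LP n) (τ : Fin n → ℤ) :
    (muPoly p).coeff τ = ∑ J ∈ p.coeff.support.powersetCard (n + 1),
      normVol J ^ 2 • if ∑ m ∈ J, m = τ then ∏ m ∈ J, p.coeff m else 0 := by
  rw [muPoly, AddMonoidAlgebra.coeff_sum, Finsupp.finsetSum_apply]
  refine Finset.sum_congr rfl fun J _ => ?_
  rw [AddMonoidAlgebra.coeff_smul, Finsupp.smul_apply, AddMonoidAlgebra.prod_single,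
    AddMonoidAlgebra.coeff_single, Finsupp.single_apply, normVol]

theorem exists_of_mem_support_muPoly {p : LP n} {τ : Fin n → ℤ}
    (hτ : τ ∈ (muPoly p).coeff.support) :
    ∃ J ⊆ p.coeff.support, J.card = n + 1 ∧
      affineSpan ℝ (emb '' (J : Set (Fin n → ℤ))) = ⊤ ∧ ∑ m ∈ J, m = τ := by
  rw [Finsupp.mem_support_iff, coeff_muPoly] at hτ
  obtain ⟨J, hJ, hne⟩ := Finset.exists_ne_zero_of_sum_ne_zero hτ
  obtain ⟨hJS, hcard⟩ := Finset.mem_powersetCard.mp hJ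
  by_cases hsum : ∑ m ∈ J, m = τ
  · refine ⟨J, hJS, hcard, (normVol_ne_zero_iff J).mp fun h => ?_, hsum⟩
    simp [h] at hne
  · simp [hsum] at hne

/-- `n + 1` affinely spanning points cannot all lie on the hyperplane `⟨u, ·⟩ = -1`. -/
theorem neg_le_dotProduct_sum {u : Fin n → ℤ} {J : Finset (Fin n → ℤ)} (hcard : J.card = n + 1)
    (hJ : affineSpan ℝ (emb '' (J : Set (Fin n → ℤ))) = ⊤) (hu : ∀ m ∈ J, -1 ≤ u ⬝ᵥ m) :
    -(n : ℤ) ≤ u ⬝ᵥ ∑ m ∈ J, m := by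
  obtain ⟨m₀, hm₀, hne⟩ : ∃ m ∈ J, u ⬝ᵥ m ≠ -1 := by
    by_contra! hall
    have := AffineMap.ext_on hJ (f := (pairRCLM (emb u)).toLinearMap.toAffineMap)
      (g := AffineMap.const ℝ _ (-1)) (by rintro _ ⟨m, hm, rfl⟩; simp [pairR_emb_emb, hall m hm])
    simpa [pairR] using congrArg (fun f => f 0) this
  have hpos : 0 < ∑ m ∈ J, (u ⬝ᵥ m + 1) :=
    Finset.sum_pos' (fun m hm => by linarith [hu m hm]) ⟨m₀, hm₀, by have := hu m₀ hm₀; lia⟩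
  rw [Finset.sum_add_distrib, ← dotProduct_sum] at hpos
  simp only [Finset.sum_const, hcard, nsmul_eq_mul, mul_one] at hpos
  push_cast at hpos
  lia

theorem neg_one_le_dotProduct_of_mem_support {ι : Type*} {p : LP n} {u : ι → Fin n → ℤ}
    (hNP : NP p = {x | ∀ k, -(1 : ℝ) ≤ pairR (emb (u k)) x}) {m : Fin n → ℤ}
    (hm : m ∈ p.coeff.support) (k : ι) : -1 ≤ u k ⬝ᵥ m := by
  have h : emb m ∈ NP p := subset_convexHull ℝ _ ⟨m, hm, rfl⟩
  rw [hNP] at h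
  exact_mod_cast (pairR_emb_emb (u k) m) ▸ h k

theorem smul_setOf_neg_one_le {ι : Type*} (w : ι → Fin n → ℝ) {c : ℝ} (hc : 0 < c) :
    c • {x | ∀ k, -1 ≤ pairR (w k) x} = {x | ∀ k, -c ≤ pairR (w k) x} := by
  ext x
  rw [Set.mem_smul_set_iff_inv_smul_mem₀ hc.ne']
  refine forall_congr' fun k => ?_
  rw [← pairRCLM_apply, map_smul, smul_eq_mul, le_inv_mul_iff₀ hc, pairRCLM_apply, mul_neg_one]

theorem NP_muPoly_subset_smul {ι : Type*} {p : LP n} {u : ι → Fin n → ℤ}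
    (hNP : NP p = {x | ∀ k, -(1 : ℝ) ≤ pairR (emb (u k)) x}) :
    NP (muPoly p) ⊆ (n : ℝ) • NP p := by
  rcases Nat.eq_zero_or_pos n with rfl | hn
  · have h0 : (0 : Fin 0 → ℝ) ∈ NP p := by
      rw [hNP]
      simp [pairR]
    exact fun x _ => Subsingleton.elim (((0 : ℕ) : ℝ) • 0) x ▸ Set.smul_mem_smul_set h0
  rw [hNP, smul_setOf_neg_one_le _ (Nat.cast_pos.mpr hn), Set.ofPred_forall]
  refine convexHull_min ?_ (convex_iInter fun k =>
    convex_halfSpace_ge (pairRCLM (emb (u k))).toLinearMap.isLinear _)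
  rintro _ ⟨τ, hτ, rfl⟩
  obtain ⟨J, hJS, hcard, hspan, rfl⟩ := exists_of_mem_support_muPoly hτ
  refine Set.mem_iInter.mpr fun k => ?_
  show -(n : ℝ) ≤ pairR (emb (u k)) (emb (∑ m ∈ J, m))
  rw [pairR_emb_emb]
  exact_mod_cast neg_le_dotProduct_sum hcard hspan fun m hm =>
    neg_one_le_dotProduct_of_mem_support hNP (hJS hm) k

theorem UnimodularSupport.exists_basis {p : LP n} (huni : UnimodularSupport p) {v : Fin n → ℤ}
    (hv : emb v ∈ (NP p).extremePoints ℝ) :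
    ∃ b : Module.Basis (Fin n) ℤ (Fin n → ℤ), (∀ i, v + b i ∈ p.coeff.support) ∧
      ∀ F, IsEdgeOf (NP p) F → emb v ∈ F → ∃ i, emb (v + b i) ∈ F := by
  obtain ⟨w, hw, hli, hspan⟩ := huni v hv
  set B := Module.Basis.mk hli hspan.ge
  set e := B.indexEquiv (Pi.basisFun ℤ (Fin n))
  refine ⟨B.reindex e, fun i => ?_, fun F hF hvF => ⟨e ⟨F, hF, hvF⟩, ?_⟩⟩
  · simpa [B] using (hw (e.symm i)).1
  · simpa [B] using (hw ⟨F, hF, hvF⟩).2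

theorem repr_sub_nonneg_of_forall_edge {κ : Type*} {p : LP n} {v : Fin n → ℤ}
    (hv : emb v ∈ (NP p).extremePoints ℝ) {b : Module.Basis κ ℤ (Fin n → ℤ)}
    (hedge : ∀ F, IsEdgeOf (NP p) F → emb v ∈ F → ∃ i, emb (v + b i) ∈ F)
    {m : Fin n → ℤ} (hm : m ∈ p.coeff.support) (i : κ) : 0 ≤ b.repr (m - v) i := by
  classical
  have := map_sub_nonneg_of_forall_edge (p.coeff.support.finite_toSet.image emb) hv
    (coordCLM b i) (fun F hF hF1 hvF => ?_) ⟨m, hm, rfl⟩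
  · rw [← emb_sub, coordCLM_emb] at this
    exact_mod_cast this
  obtain ⟨j, hj⟩ := hedge F ⟨hF, hF1⟩ hvF
  refine ⟨_, hj, fun h => b.ne_zero j (add_eq_left.mp (emb_injective h)), ?_⟩
  rw [← emb_sub, add_sub_cancel_left, coordCLM_emb, b.repr_self, Finsupp.single_apply]
  split_ifs <;> norm_num

theorem coordCLM_le_of_mem_NP {κ : Type*} {p : LP n} {v : Fin n → ℤ}
    {b : Module.Basis κ ℤ (Fin n → ℤ)} (hcone : ∀ m ∈ p.coeff.support, ∀ i, 0 ≤ b.repr (m - v) i)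
    (i : κ) : ∀ x ∈ NP p, coordCLM b i (emb v) ≤ coordCLM b i x := fun x hx => by
  refine convexHull_min ?_ (convex_halfSpace_ge (coordCLM b i).toLinearMap.isLinear _) hx
  rintro _ ⟨m, hm, rfl⟩
  show coordCLM b i (emb v) ≤ coordCLM b i (emb m)
  have := hcone m hm i
  rw [map_sub, Finsupp.sub_apply] at this
  rw [coordCLM_emb, coordCLM_emb]
  exact_mod_cast (by lia : b.repr v i ≤ b.repr m i)

/-- The facet of the reflexive polytope `NP p` through `v` and the `v + b j`, `j ≠ i`, has
primitive normal `u k` equal to the `i`-th coordinate functional, which takes the value `-1`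
on it. -/
theorem repr_eq_neg_one {ι : Type*} [Finite ι] {p : LP n} {u : ι → Fin n → ℤ}
    (hprim : ∀ k, IsPrimitive (u k))
    (hNP : NP p = {x | ∀ k, -(1 : ℝ) ≤ pairR (emb (u k)) x}) {v : Fin n → ℤ}
    (hv : v ∈ p.coeff.support) {b : Module.Basis (Fin n) ℤ (Fin n → ℤ)}
    (hb : ∀ i, v + b i ∈ p.coeff.support)
    (hcone : ∀ m ∈ p.coeff.support, ∀ i, 0 ≤ b.repr (m - v) i) (i : Fin n) :
    b.repr v i = -1 := by
  have hP : NP p = {x | ∀ k, (fun _ => (-1 : ℝ)) k ≤ pairRCLM (emb (u k)) x} := hNP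
  have hmin := coordCLM_le_of_mem_NP hcone i
  set y : Fin n → Fin n → ℤ := Function.update (fun j => v + b j) i v
  have hy : ∀ j, y j ∈ p.coeff.support := fun j => by
    rcases eq_or_ne j i with rfl | hj
    · simpa [y] using hv
    · simpa [y, hj] using hb j
  have hyi : ∀ j, b.repr (y j) i = b.repr v i := fun j => by
    rcases eq_or_ne j i with rfl | hj
    · simp [y]
    · simp [y, hj, hj.symm]
  have hφ : coordCLM b i ≠ 0 := fun h => by
    simpa using congrArg (fun φ => φ (emb (b i))) h |>.symm.trans (coordCLM_emb b i (b i))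
  have : Nonempty (Fin n) := ⟨i⟩
  obtain ⟨k, hk⟩ := exists_forall_eq_of_isMinOn hφ (y := fun j => emb (y j))
    (fun j => by rw [← hP]; exact subset_convexHull ℝ _ ⟨y j, hy j, rfl⟩)
    (fun j => isMinOn_iff.mpr fun z hz => by
      rw [coordCLM_emb, hyi, ← coordCLM_emb]
      exact hmin z (by rw [hP]; exact hz))
  have hk' : ∀ j, u k ⬝ᵥ y j = -1 := fun j => by
    have := hk j
    rw [pairRCLM_apply, pairR_emb_emb] at this
    exact_mod_cast this
  have hkv : u k ⬝ᵥ v = -1 := by simpa [y] using hk' i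
  have hkb : ∀ j ≠ i, u k ⬝ᵥ b j = 0 := fun j hj => by
    have := hk' j
    simp only [y, Function.update_of_ne hj, dotProduct_add, hkv] at this
    lia
  have hkbi : 0 ≤ u k ⬝ᵥ b i := by
    have := neg_one_le_dotProduct_of_mem_support hNP (hb i) k
    rw [dotProduct_add, hkv] at this
    lia
  rw [← (hprim k).dotProduct_eq_repr b hkbi hkb v, hkv]

theorem coeff_muPoly_nsmul_ne_zero {p : LP n} {v : Fin n → ℤ} (hv : v ∈ p.coeff.support)
    {b : Module.Basis (Fin n) ℤ (Fin n → ℤ)} (hb : ∀ i, v + b i ∈ p.coeff.support)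
    (hcone : ∀ m ∈ p.coeff.support, ∀ i, 0 ≤ b.repr (m - v) i) (hneg : ∀ i, b.repr v i = -1) :
    (muPoly p).coeff (n • v) ≠ 0 := by
  set J₀ := insert v (Finset.univ.image fun i => v + b i)
  have hbv : ∑ i, b i = -v := by
    conv_rhs => rw [← b.sum_repr v]
    simp [hneg]
  have hsum_iff : ∀ J : Finset (Fin n → ℤ), J.card = n + 1 →
      (∑ m ∈ J, m = n • v ↔ ∑ m ∈ J, (m - v) = ∑ i, b i) := fun J hJ => by
    rw [Finset.sum_sub_distrib, Finset.sum_const, hJ, hbv, sub_eq_iff_eq_add,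
      show -v + (n + 1) • v = n • v by rw [succ_nsmul]; abel]
  have hvJ : v ∉ Finset.univ.image fun i => v + b i := by
    simp [b.ne_zero]
  have hinj : Function.Injective fun i => v + b i := (add_right_injective v).comp b.injective
  have hJ₀card : J₀.card = n + 1 := by
    rw [Finset.card_insert_of_notMem hvJ, Finset.card_image_of_injective _ hinj,
      Finset.card_univ, Fintype.card_fin]
  have hJ₀S : J₀ ⊆ p.coeff.support := by
    simp [J₀, Finset.insert_subset_iff, Finset.image_subset_iff, hv, hb]
  have hJ₀sum : ∑ m ∈ J₀, (m - v) = ∑ i, b i := by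
    simp [J₀, Finset.sum_insert hvJ, Finset.sum_image fun i _ j _ h => hinj h]
  rw [coeff_muPoly, Finset.sum_eq_single J₀]
  · rw [if_pos ((hsum_iff J₀ hJ₀card).mpr hJ₀sum)]
    refine smul_ne_zero (pow_ne_zero _ ((normVol_ne_zero_iff J₀).mpr ?_))
      (Finset.prod_ne_zero_iff.mpr fun m hm => Finsupp.mem_support_iff.mp (hJ₀S hm))
    exact affineSpan_eq_top_of_basis b ⟨v, by simp [J₀], rfl⟩ fun i => ⟨v + b i, by simp [J₀], rfl⟩
  · intro J hJ hne
    obtain ⟨hJS, hJcard⟩ := Finset.mem_powersetCard.mp hJ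
    rw [if_neg fun hsum => hne (b.eq_insert_image_of_sum_sub_eq (fun m hm => hcone m (hJS hm))
      (by simpa using hJcard) ((hsum_iff J hJcard).mp hsum)), smul_zero]
  · exact fun h => absurd (Finset.mem_powersetCard.mpr ⟨hJ₀S, hJ₀card⟩) h

theorem smul_mem_NP_muPoly_of_mem_extremePoints {ι : Type*} [Finite ι] {p : LP n}
    (huni : UnimodularSupport p) {u : ι → Fin n → ℤ} (hprim : ∀ k, IsPrimitive (u k))
    (hNP : NP p = {x | ∀ k, -(1 : ℝ) ≤ pairR (emb (u k)) x}) {x : Fin n → ℝ}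
    (hx : x ∈ (NP p).extremePoints ℝ) : (n : ℝ) • x ∈ NP (muPoly p) := by
  obtain ⟨v, hv, rfl⟩ := extremePoints_convexHull_subset hx
  obtain ⟨b, hb, hedge⟩ := huni.exists_basis hx
  have hcone := fun m hm i => repr_sub_nonneg_of_forall_edge hx hedge (m := m) hm i
  rw [← emb_nsmul]
  exact subset_convexHull ℝ _ ⟨_, Finsupp.mem_support_iff.mpr (coeff_muPoly_nsmul_ne_zero hv hb
    hcone (repr_eq_neg_one hprim hNP hv hb hcone)), rfl⟩

end NewtonPolytope

theorem statement11_general {n : ℕ} (p : LP n)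
    (huni : UnimodularSupport p)
    {ι : Type} [Fintype ι] (u : ι → (Fin n → ℤ))
    (hprim : ∀ k, IsPrimitive (u k))
    (hNP : NP p = {x | ∀ k, -(1 : ℝ) ≤ pairR (emb (u k)) x}) :
    NP (muPoly p) = (n : ℝ) • NP p := by
  refine (NP_muPoly_subset_smul hNP).antisymm ?_
  have hfin : (emb '' (p.coeff.support : Set (Fin n → ℤ))).Finite :=
    p.coeff.support.finite_toSet.image emb
  calc (n : ℝ) • NP p = convexHull ℝ ((n : ℝ) • (NP p).extremePoints ℝ) := by
        rw [convexHull_smul, NP, hfin.convexHull_extremePoints_convexHull]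
    _ ⊆ NP (muPoly p) := convexHull_min (by
        rintro _ ⟨x, hx, rfl⟩
        exact smul_mem_NP_muPoly_of_mem_extremePoints huni hprim hNP hx) (convex_convexHull ℝ _)

/-- let `p` have unimodular support. If `NP(p)` is a reflexive
polytope (it is `n`-dimensional and can be written as
`{x : ⟨u_τ, x⟩ ≥ −1 for all τ}` with each `u_τ` a primitive lattice vector),
then `NP(μ(p)) = n·NP(p)`. -/
theorem statement11 {n : ℕ} (p : LP n) (hp : p ≠ 0)
    (huni : UnimodularSupport p)
    (hfull : affineSpan ℝ (emb '' (p.coeff.support : Set (Fin n → ℤ))) = ⊤)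
    {ι : Type} [Fintype ι] (u : ι → (Fin n → ℤ))
    (hprim : ∀ k, IsPrimitive (u k))
    (hNP : NP p = {x | ∀ k, -(1 : ℝ) ≤ pairR (emb (u k)) x}) :
    NP (muPoly p) = (n : ℝ) • NP p :=
  statement11_general p huni u hprim hNP

end
end

section
/- Let p ∈ ℂ[x^{±1}] be a one-variable Laurent polynomial with unimodular support (i.e., both the lowest and second-lowest, and highest and second-highest exponents of NP(p) are attained with nonzero coefficients; equivalently the coefficients adjacent to both endpoints of NP(p) are nonzero). Then μ(p) divides p^κ for some positive integer κ if and only if p = c·x^m·(x+ξ)^ν for some c, ξ ∈ ℂ*, m ∈ ℤ, and ν ∈ ℤ_{>0}. -/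
open LaurentPolynomial

noncomputable section

/-- Laurent polynomials in one variable over `ℂ`. -/
abbrev LP1 := LaurentPolynomial ℂ

instance : IsDomain LP1 := NoZeroDivisors.to_isDomain _

/-- The operator `D = x·d/dx` on one-variable Laurent polynomials:
`D x^m = m·x^m`. -/
def D1 (p : LP1) : LP1 :=
  p.coeff.sum fun m c => AddMonoidAlgebra.single m ((m : ℂ) * c)

/-- `δ(p) = D² log p = (D²p·p − (Dp)²)/p²` as a rational function. -/
def delta1 (p : LP1) : FractionRing LP1 :=
  algebraMap LP1 (FractionRing LP1) (D1 (D1 p) * p - D1 p * D1 p) /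
    (algebraMap LP1 (FractionRing LP1) p) ^ 2

/-- The Monge–Ampère polynomial of a one-variable Laurent polynomial:
`μ(p) = p²·δ(p) = D²p·p − (Dp)²`. -/
def mu1 (p : LP1) : LP1 := D1 (D1 p) * p - D1 p * D1 p

/-!
Write `p = x^s f` with `f ∈ ℂ[x]`, `f(0) ≠ 0` and `deg f = n`; then `μ(p) = x^{2s} μ(f)`, where
`μ(g) = D²g·g − (Dg)²` satisfies `μ(gh) = h²μ(g) + g²μ(h)` for every derivation `D`.
Unimodularity says that the coefficients of `x` and `x^{n-1}` in `f` do not vanish, so `μ(f)` has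
degree `2n − 1` and vanishes to order at most one at `0`. At a root `r ≠ 0` of `f` of multiplicity
`ν`, `μ(f)` vanishes to order exactly `2ν − 2`, because `μ(x − r) = −r x` does not vanish at `r`.
If `μ(p) ∣ p^κ`, every nonzero root of `μ(f)` is a root of `f`, and counting the roots of `μ(f)`
gives `2n − 1 ≤ 1 + ∑ (2ν_r − 2) = 1 + 2n − 2·#{roots of f}`: `f` has a single root.
Conversely `μ(c x^m (x + ξ)^ν) = ν c² ξ x^{2m+1} (x + ξ)^{2ν−2}` divides `p²`.
-/

section MongeAmpere

variable {R A : Type*} [CommSemiring R] [CommRing A] [Algebra R A]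

def mongeAmpere (D : Derivation R A A) (a : A) : A := D (D a) * a - D a ^ 2

variable (D : Derivation R A A)

lemma mongeAmpere_mul (a b : A) :
    mongeAmpere D (a * b) = b ^ 2 * mongeAmpere D a + a ^ 2 * mongeAmpere D b := by
  simp only [mongeAmpere, Derivation.leibniz, smul_eq_mul, map_add]
  ring

lemma mongeAmpere_pow_succ (a : A) (n : ℕ) :
    mongeAmpere D (a ^ (n + 1)) = (n + 1 : A) * a ^ (2 * n) * mongeAmpere D a := by
  induction n with
  | zero => simp
  | succ n ih =>
    rw [pow_succ, mongeAmpere_mul, ih]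
    push_cast
    ring

end MongeAmpere

namespace Polynomial

variable {R : Type*} [CommRing R]

variable (R) in
abbrev xDeriv : Derivation R R[X] R[X] := mkDerivation R X

lemma xDeriv_apply (f : R[X]) : xDeriv R f = X * derivative f := by
  rw [mkDerivation_apply, smul_eq_mul, mul_comm]

lemma coeff_xDeriv (f : R[X]) (k : ℕ) : (xDeriv R f).coeff k = k * f.coeff k := by
  rcases k with _ | k
  · simp [xDeriv_apply]
  · rw [xDeriv_apply, coeff_X_mul, coeff_derivative]
    push_cast
    ring

lemma xDeriv_monomial (n : ℕ) (a : R) : xDeriv R (monomial n a) = monomial n (n * a) := by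
  ext k
  rw [coeff_xDeriv, coeff_monomial, coeff_monomial]
  split_ifs with h <;> simp [h]

lemma natDegree_xDeriv_le (f : R[X]) : (xDeriv R f).natDegree ≤ f.natDegree :=
  natDegree_le_iff_coeff_eq_zero.mpr fun k hk ↦ by
    rw [coeff_xDeriv, coeff_eq_zero_of_natDegree_lt hk, mul_zero]

lemma mongeAmpere_xDeriv_X_sub_C (r : R) :
    mongeAmpere (xDeriv R) (X - C r) = -(C r * X) := by
  simp only [mongeAmpere, map_sub, mkDerivation_X, derivation_C, sub_zero]
  ring

lemma coeff_one_mongeAmpere_xDeriv (f : R[X]) :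
    (mongeAmpere (xDeriv R) f).coeff 1 = f.coeff 0 * f.coeff 1 := by
  simp [mongeAmpere, coeff_mul, Finset.Nat.antidiagonal_succ, coeff_xDeriv, sq, mul_comm]

lemma coeff_mul_of_natDegree_le_succ {f g : R[X]} {n : ℕ} (hf : f.natDegree ≤ n + 1)
    (hg : g.natDegree ≤ n + 1) :
    (f * g).coeff (2 * n + 1) = f.coeff (n + 1) * g.coeff n + f.coeff n * g.coeff (n + 1) := by
  rw [coeff_mul, Finset.sum_eq_add_of_mem (n + 1, n) (n, n + 1) (by simp; omega) (by simp; omega)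
    (by simp)]
  rintro ⟨i, j⟩ hij hne
  simp only [Finset.HasAntidiagonal.mem_antidiagonal, ne_eq, Prod.mk.injEq] at hij hne
  rcases Nat.lt_or_ge (n + 1) i with hi | hi
  · rw [coeff_eq_zero_of_natDegree_lt (hf.trans_lt hi), zero_mul]
  · rw [coeff_eq_zero_of_natDegree_lt (hg.trans_lt (by omega)), mul_zero]

lemma coeff_mongeAmpere_xDeriv_of_natDegree_eq_succ {f : R[X]} {n : ℕ}
    (hf : f.natDegree = n + 1) :
    (mongeAmpere (xDeriv R) f).coeff (2 * n + 1) = f.coeff (n + 1) * f.coeff n := by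
  have h1 : (xDeriv R f).natDegree ≤ n + 1 := hf ▸ natDegree_xDeriv_le f
  have h2 : (xDeriv R (xDeriv R f)).natDegree ≤ n + 1 := (natDegree_xDeriv_le _).trans h1
  rw [mongeAmpere, coeff_sub, sq, coeff_mul_of_natDegree_le_succ h2 hf.le,
    coeff_mul_of_natDegree_le_succ h1 h1]
  simp only [coeff_xDeriv]
  push_cast
  ring

lemma rootMultiplicity_zero_mongeAmpere_xDeriv_le_one {f : R[X]}
    (hf : f.coeff 0 * f.coeff 1 ≠ 0) : rootMultiplicity 0 (mongeAmpere (xDeriv R) f) ≤ 1 := by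
  rw [rootMultiplicity_eq_natTrailingDegree']
  exact natTrailingDegree_le_of_ne_zero (by rwa [coeff_one_mongeAmpere_xDeriv])

section IsDomain

variable [IsDomain R] [CharZero R]

lemma rootMultiplicity_mongeAmpere_xDeriv_add_two {f : R[X]} {r : R} (hf : f ≠ 0) (hr : r ≠ 0)
    (hroot : f.IsRoot r) :
    rootMultiplicity r (mongeAmpere (xDeriv R) f) + 2 = 2 * rootMultiplicity r f := by
  obtain ⟨k, hk⟩ := Nat.exists_eq_add_one.mpr ((rootMultiplicity_pos hf).mpr hroot)
  have hfu := pow_mul_divByMonic_rootMultiplicity_eq f r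
  have hur := eval_divByMonic_pow_rootMultiplicity_ne_zero r hf
  rw [hk] at hfu hur
  generalize f /ₘ (X - C r) ^ (k + 1) = u at hfu hur
  set w := (k + 1 : R[X]) * u ^ 2 * -(C r * X) + (X - C r) ^ 2 * mongeAmpere (xDeriv R) u
  have hμ : mongeAmpere (xDeriv R) f = w * (X - C r) ^ (2 * k) := by
    rw [← hfu, mongeAmpere_mul, mongeAmpere_pow_succ, mongeAmpere_xDeriv_X_sub_C]
    ring
  have hwr : ¬ w.IsRoot r := by
    have : w.eval r = -((k + 1) * u.eval r ^ 2 * (r * r)) := by simp [w]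
    rw [IsRoot, this, neg_eq_zero]
    exact mul_ne_zero (mul_ne_zero (Nat.cast_add_one_ne_zero k) (pow_ne_zero 2 hur))
      (mul_ne_zero hr hr)
  have hw0 : w ≠ 0 := fun h ↦ hwr (by simp [h])
  rw [hμ, rootMultiplicity_mul_X_sub_C_pow hw0, rootMultiplicity_eq_zero hwr, hk]
  ring

end IsDomain

section IsAlgClosed

variable {K : Type*} [Field K] [IsAlgClosed K]

lemma eq_C_leadingCoeff_mul_X_sub_C_pow {f : K[X]} {r : K} (hr : ∀ z ∈ f.roots, z = r) :
    f = C f.leadingCoeff * (X - C r) ^ f.natDegree := by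
  have h := C_leadingCoeff_mul_prod_multiset_X_sub_C IsAlgClosed.card_roots_eq_natDegree (p := f)
  rw [Multiset.eq_replicate_of_mem hr, IsAlgClosed.card_roots_eq_natDegree] at h
  simpa using h.symm

variable [CharZero K]

theorem card_roots_toFinset_le_one_of_isRoot_mongeAmpere_xDeriv [DecidableEq K] {f : K[X]}
    {n : ℕ} (hdeg : f.natDegree = n + 1) (h0 : f.coeff 0 ≠ 0) (h1 : f.coeff 1 ≠ 0)
    (hn : f.coeff n ≠ 0)
    (hroots : ∀ z ≠ 0, (mongeAmpere (xDeriv K) f).IsRoot z → f.IsRoot z) :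
    f.roots.toFinset.card ≤ 1 := by
  set μ := mongeAmpere (xDeriv K) f
  have hf : f ≠ 0 := fun h ↦ h0 (by simp [h])
  have hdegμ : 2 * n + 1 ≤ μ.natDegree := le_natDegree_of_ne_zero <| by
    rw [coeff_mongeAmpere_xDeriv_of_natDegree_eq_succ hdeg, ← hdeg]
    exact mul_ne_zero (leadingCoeff_ne_zero.mpr hf) hn
  have hμ : μ ≠ 0 := ne_zero_of_natDegree_gt hdegμ
  have h0R : (0 : K) ∉ f.roots.toFinset := by simpa [hf, coeff_zero_eq_eval_zero] using h0
  have hμroots : μ.natDegree =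
      rootMultiplicity 0 μ + ∑ z ∈ f.roots.toFinset, rootMultiplicity z μ := by
    rw [← IsAlgClosed.card_roots_eq_natDegree,
      ← Multiset.sum_count_eq_card (s := insert 0 f.roots.toFinset), Finset.sum_insert h0R]
    · simp only [count_roots]
    · intro z hz
      rcases eq_or_ne z 0 with rfl | hz0
      · exact Finset.mem_insert_self _ _
      · exact Finset.mem_insert_of_mem <| by
          simpa [hf] using hroots z hz0 ((mem_roots hμ).mp hz)
  have hfroots : ∑ z ∈ f.roots.toFinset, (rootMultiplicity z μ + 2) = 2 * (n + 1) := by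
    rw [← hdeg, ← IsAlgClosed.card_roots_eq_natDegree, ← Multiset.toFinset_sum_count_eq,
      Finset.mul_sum]
    refine Finset.sum_congr rfl fun z hz ↦ ?_
    rw [count_roots]
    exact rootMultiplicity_mongeAmpere_xDeriv_add_two hf (ne_of_mem_of_not_mem hz h0R)
      ((mem_roots hf).mp (Multiset.mem_toFinset.mp hz))
  rw [Finset.sum_add_distrib, Finset.sum_const, smul_eq_mul] at hfroots
  have h0μ : rootMultiplicity 0 μ ≤ 1 :=
    rootMultiplicity_zero_mongeAmpere_xDeriv_le_one (mul_ne_zero h0 h1)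
  omega

theorem exists_eq_C_mul_X_sub_C_pow_of_isRoot_mongeAmpere_xDeriv {f : K[X]} {n : ℕ}
    (hdeg : f.natDegree = n + 1) (h0 : f.coeff 0 ≠ 0) (h1 : f.coeff 1 ≠ 0) (hn : f.coeff n ≠ 0)
    (hroots : ∀ z ≠ 0, (mongeAmpere (xDeriv K) f).IsRoot z → f.IsRoot z) :
    ∃ r ≠ 0, f = C f.leadingCoeff * (X - C r) ^ (n + 1) := by
  classical
  have hf : f ≠ 0 := fun h ↦ h0 (by simp [h])
  have hcard := card_roots_toFinset_le_one_of_isRoot_mongeAmpere_xDeriv hdeg h0 h1 hn hroots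
  obtain ⟨r, hr⟩ := IsAlgClosed.exists_root f <| by
    rw [degree_eq_natDegree hf, hdeg]; exact_mod_cast n.succ_ne_zero
  have hrf : r ∈ f.roots.toFinset := by simpa [hf] using hr
  refine ⟨r, ?_, ?_⟩
  · rintro rfl
    exact h0 (by rwa [coeff_zero_eq_eval_zero])
  · rw [← hdeg]
    exact eq_C_leadingCoeff_mul_X_sub_C_pow fun z hz ↦
      Finset.card_le_one.mp hcard z (Multiset.mem_toFinset.mpr hz) r hrf

end IsAlgClosed

end Polynomial

open Polynomial (toLaurent)
open scoped Polynomial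

namespace LaurentPolynomial

variable {R : Type*} [Semiring R]

lemma coeff_mul_T (p : R[T;T⁻¹]) (n a : ℤ) : (p * T n).coeff a = p.coeff (a - n) := by
  rw [T, AddMonoidAlgebra.coeff_mul_single_apply, mul_one, sub_eq_add_neg]

lemma coeff_trunc (p : R[T;T⁻¹]) (k : ℕ) : (trunc p).coeff k = p.coeff k := rfl

lemma coeff_toLaurent_natCast (f : R[X]) (k : ℕ) : (toLaurent f).coeff k = f.coeff k := by
  rw [coeff_toLaurent]
  exact Finsupp.mapDomain_apply Nat.castEmbedding.injective _ k

lemma coeff_toLaurent_of_neg (f : R[X]) {a : ℤ} (ha : a < 0) : (toLaurent f).coeff a = 0 := by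
  rw [coeff_toLaurent, Finsupp.mapDomain_of_notMem_range]
  rintro ⟨k, rfl⟩
  exact (Int.natCast_nonneg k).not_gt ha

lemma toLaurent_trunc_of_coeff_eq_zero (p : R[T;T⁻¹]) (h : ∀ a < 0, p.coeff a = 0) :
    toLaurent (trunc p) = p := by
  ext a
  rcases lt_or_ge a 0 with ha | ha
  · rw [coeff_toLaurent_of_neg _ ha, h a ha]
  · lift a to ℕ using ha
    rw [coeff_toLaurent_natCast, coeff_trunc]

lemma exists_eq_toLaurent_mul_T (p : R[T;T⁻¹]) (s : ℤ) (h : ∀ a < s, p.coeff a = 0) :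
    ∃ f : R[X], p = toLaurent f * T s ∧ ∀ k : ℕ, f.coeff k = p.coeff (s + k) := by
  refine ⟨trunc (p * T (-s)), ?_, fun k ↦ ?_⟩
  · rw [toLaurent_trunc_of_coeff_eq_zero _ fun a ha ↦ by rw [coeff_mul_T]; exact h _ (by omega),
      mul_T_assoc, neg_add_cancel, T_zero, mul_one]
  · rw [coeff_trunc, coeff_mul_T, sub_neg_eq_add, add_comm]

lemma exists_eq_toLaurent_mul_T_min' (p : R[T;T⁻¹]) (hS : p.coeff.support.Nonempty) :
    ∃ f : R[X], p = toLaurent f * T (p.coeff.support.min' hS) ∧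
      p.coeff.support.min' hS + f.natDegree = p.coeff.support.max' hS ∧
      ∀ k : ℕ, f.coeff k = p.coeff (p.coeff.support.min' hS + k) := by
  set s := p.coeff.support.min' hS
  set t := p.coeff.support.max' hS
  obtain ⟨f, hpf, hf⟩ := exists_eq_toLaurent_mul_T p s fun a ha ↦
    Finsupp.notMem_support_iff.mp fun h ↦ (Finset.min'_le _ _ h).not_gt ha
  refine ⟨f, hpf, ?_, hf⟩
  have hst : s ≤ t := Finset.min'_le _ _ (Finset.max'_mem _ _)
  have hdeg : f.natDegree = (t - s).toNat := by
    apply le_antisymm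
    · refine Polynomial.natDegree_le_iff_coeff_eq_zero.mpr fun k hk ↦ ?_
      rw [hf, ← Finsupp.notMem_support_iff]
      exact fun h ↦ (Finset.le_max' _ _ h).not_gt (by omega)
    · refine Polynomial.le_natDegree_of_ne_zero ?_
      rw [hf, ← Finsupp.mem_support_iff, show s + ((t - s).toNat : ℤ) = t by omega]
      exact Finset.max'_mem _ _
  omega

lemma isRoot_of_toLaurent_mul_T_dvd_pow {K : Type*} [Field K] {f g : K[X]} {a b : ℤ} {κ : ℕ}
    (h : toLaurent g * T a ∣ (toLaurent f * T b) ^ κ) {z : K} (hz : z ≠ 0) (hg : g.IsRoot z) :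
    f.IsRoot z := by
  have := map_dvd (eval₂ (RingHom.id K) (Units.mk0 z hz)) h
  simp only [map_mul, eval₂_toLaurent, Units.val_mk0, Polynomial.eval₂_id, hg.eq_zero, eval₂_T,
    Units.val_zpow_eq_zpow_val, zero_mul, map_pow, GroupWithZero.dvd_iff, pow_eq_zero_iff',
    mul_eq_zero, ne_eq, forall_const] at this
  exact this.1.resolve_right (zpow_ne_zero b hz)

end LaurentPolynomial

lemma D1_C_mul_T (a : ℂ) (n : ℤ) : D1 (C a * T n) = C (n * a) * T n := by
  rw [← single_eq_C_mul_T, ← single_eq_C_mul_T, D1, AddMonoidAlgebra.coeff_single]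
  exact Finsupp.sum_single_index (by simp)

lemma D1_C (a : ℂ) : D1 (C a) = 0 := by
  simpa using D1_C_mul_T a 0

lemma D1_add (p q : LP1) : D1 (p + q) = D1 p + D1 q := by
  rw [D1, D1, D1, AddMonoidAlgebra.coeff_add]
  exact Finsupp.sum_add_index (fun _ _ ↦ by simp) fun _ _ _ _ ↦ by
    rw [mul_add, AddMonoidAlgebra.single_add]

lemma D1_mul (p q : LP1) : D1 (p * q) = p * D1 q + q * D1 p := by
  induction p using LaurentPolynomial.induction_on' with
  | add p p' hp hp' => rw [add_mul, D1_add, D1_add, hp, hp']; ring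
  | C_mul_T n a =>
    induction q using LaurentPolynomial.induction_on' with
    | add q q' hq hq' => rw [mul_add, D1_add, D1_add, hq, hq']; ring
    | C_mul_T m b =>
      rw [show C a * T n * (C b * T m) = C (a * b) * T (n + m) by rw [T_add, map_mul]; ring,
        D1_C_mul_T, D1_C_mul_T, D1_C_mul_T, T_add]
      simp only [map_mul, Int.cast_add, map_add]
      ring

def eulerDerivation : Derivation ℂ LP1 LP1 where
  toFun := D1
  map_add' := D1_add
  map_smul' a p := by
    rw [RingHom.id_apply, smul_eq_C_mul, smul_eq_C_mul, D1_mul, D1_C, mul_zero, add_zero]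
  map_one_eq_zero' := by
    change D1 1 = 0
    rw [← map_one C, D1_C]
  leibniz' := D1_mul

lemma eulerDerivation_apply (p : LP1) : eulerDerivation p = D1 p := rfl

lemma mu1_eq_mongeAmpere (p : LP1) : mu1 p = mongeAmpere eulerDerivation p := by
  rw [mu1, mongeAmpere, sq, eulerDerivation_apply, eulerDerivation_apply]

lemma D1_toLaurent (f : ℂ[X]) : D1 (toLaurent f) = toLaurent (Polynomial.xDeriv ℂ f) := by
  induction f using Polynomial.induction_on' with
  | add f g hf hg => rw [map_add, D1_add, hf, hg, map_add, map_add]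
  | monomial n a =>
    rw [Polynomial.xDeriv_monomial, ← Polynomial.C_mul_X_pow_eq_monomial,
      ← Polynomial.C_mul_X_pow_eq_monomial, Polynomial.toLaurent_C_mul_X_pow,
      Polynomial.toLaurent_C_mul_X_pow, D1_C_mul_T, Int.cast_natCast]

lemma mongeAmpere_eulerDerivation_toLaurent (f : ℂ[X]) :
    mongeAmpere eulerDerivation (toLaurent f) =
      toLaurent (mongeAmpere (Polynomial.xDeriv ℂ) f) := by
  simp only [mongeAmpere, eulerDerivation_apply, D1_toLaurent, map_sub, map_mul, map_pow]

lemma mongeAmpere_eulerDerivation_C_mul_T (a : ℂ) (n : ℤ) :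
    mongeAmpere eulerDerivation (C a * T n) = 0 := by
  rw [mongeAmpere, eulerDerivation_apply, eulerDerivation_apply, D1_C_mul_T, D1_C_mul_T]
  simp only [map_mul]
  ring

lemma mongeAmpere_eulerDerivation_T_one_add_C (ξ : ℂ) :
    mongeAmpere eulerDerivation (T 1 + C ξ) = C ξ * T 1 := by
  have hT : eulerDerivation (T 1) = T 1 := by
    rw [eulerDerivation_apply]
    simpa using D1_C_mul_T 1 1
  have hC : eulerDerivation (C ξ) = 0 := D1_C ξ
  rw [mongeAmpere, map_add, hT, hC, add_zero, hT]
  ring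

lemma mu1_toLaurent_mul_T (f : ℂ[X]) (s : ℤ) :
    mu1 (toLaurent f * T s) = toLaurent (mongeAmpere (Polynomial.xDeriv ℂ) f) * T (2 * s) := by
  have hT : mongeAmpere eulerDerivation (T s) = 0 := by
    simpa using mongeAmpere_eulerDerivation_C_mul_T 1 s
  rw [mu1_eq_mongeAmpere, mongeAmpere_mul, hT, mongeAmpere_eulerDerivation_toLaurent, T_pow]
  push_cast
  ring

lemma mu1_C_mul_T_mul_pow_dvd_sq {c ξ : ℂ} {m : ℤ} {ν : ℕ} (hc : c ≠ 0) (hξ : ξ ≠ 0)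
    (hν : 0 < ν) : mu1 (C c * T m * (T 1 + C ξ) ^ ν) ∣ (C c * T m * (T 1 + C ξ) ^ ν) ^ 2 := by
  obtain ⟨k, rfl⟩ := Nat.exists_eq_add_one.mpr hν
  have hμ : mu1 (C c * T m * (T 1 + C ξ) ^ (k + 1)) =
      ((C c * T m) ^ 2 * (k + 1 : LP1) * (C ξ * T 1)) * (T 1 + C ξ) ^ (2 * k) := by
    rw [mu1_eq_mongeAmpere, mongeAmpere_mul, mongeAmpere_eulerDerivation_C_mul_T,
      mongeAmpere_pow_succ, mongeAmpere_eulerDerivation_T_one_add_C]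
    ring
  have hk : IsUnit (k + 1 : LP1) := by
    rw [show (k + 1 : LP1) = C ((k : ℂ) + 1) by simp]
    exact (Nat.cast_add_one_ne_zero k).isUnit.map C
  have hunit : IsUnit ((C c * T m) ^ 2 * (k + 1 : LP1) * (C ξ * T 1)) :=
    ((((hc.isUnit.map C).mul (isUnit_T m)).pow 2).mul hk).mul
      ((hξ.isUnit.map C).mul (isUnit_T 1))
  rw [hμ, hunit.mul_left_dvd, mul_pow, ← pow_mul]
  exact Dvd.dvd.mul_left (pow_dvd_pow _ (by omega)) _

theorem exists_eq_C_mul_T_mul_pow_of_mu1_dvd_pow {f : ℂ[X]} {s : ℤ} {n κ : ℕ}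
    (hdeg : f.natDegree = n + 1) (h0 : f.coeff 0 ≠ 0) (h1 : f.coeff 1 ≠ 0) (hn : f.coeff n ≠ 0)
    (h : mu1 (toLaurent f * T s) ∣ (toLaurent f * T s) ^ κ) :
    ∃ ξ ≠ 0, toLaurent f * T s = C f.leadingCoeff * T s * (T 1 + C ξ) ^ (n + 1) := by
  rw [mu1_toLaurent_mul_T] at h
  obtain ⟨r, hr, hf⟩ := Polynomial.exists_eq_C_mul_X_sub_C_pow_of_isRoot_mongeAmpere_xDeriv
    hdeg h0 h1 hn fun z hz ↦ isRoot_of_toLaurent_mul_T_dvd_pow h hz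
  refine ⟨-r, neg_ne_zero.mpr hr, ?_⟩
  conv_lhs => rw [hf]
  simp only [map_mul, map_pow, map_sub, Polynomial.toLaurent_C, Polynomial.toLaurent_X, map_neg]
  ring

/-- let `p ∈ ℂ[x^{±1}]` be nonzero with unimodular support,
i.e. the exponents adjacent to both endpoints of its Newton segment occur in
the support. Then `μ(p) ∣ p^κ` for some positive integer `κ` (the generalized
Einstein condition) if and only if `p = c·x^m·(x+ξ)^ν` with `c, ξ ∈ ℂ*`,
`m ∈ ℤ` and `ν ∈ ℤ_{>0}`. -/
theorem statement13 (p : LP1) (hp : p ≠ 0)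
    (huni : 1 < p.coeff.support.card →
      p.coeff.support.min' (Finsupp.support_nonempty_iff.mpr (mt AddMonoidAlgebra.coeff_eq_zero.mp hp)) + 1 ∈ p.coeff.support ∧
      p.coeff.support.max' (Finsupp.support_nonempty_iff.mpr (mt AddMonoidAlgebra.coeff_eq_zero.mp hp)) - 1 ∈ p.coeff.support) :
    (∃ κ : ℕ, 0 < κ ∧ mu1 p ∣ p ^ κ) ↔
      ∃ (c ξ : ℂ) (m : ℤ) (ν : ℕ), c ≠ 0 ∧ ξ ≠ 0 ∧ 0 < ν ∧
        p = C c * T m * (T 1 + C ξ) ^ ν := by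
  constructor
  · rintro ⟨κ, hκ, hdvd⟩
    set hS := Finsupp.support_nonempty_iff.mpr (mt AddMonoidAlgebra.coeff_eq_zero.mp hp)
    obtain ⟨f, hpf, hst, hcoeff⟩ := exists_eq_toLaurent_mul_T_min' p hS
    set s := p.coeff.support.min' hS
    have hμ : mu1 p ≠ 0 := fun h ↦ pow_ne_zero κ hp (zero_dvd_iff.mp (h ▸ hdvd))
    obtain ⟨n, hdeg⟩ : ∃ n, f.natDegree = n + 1 :=
      Nat.exists_eq_add_one.mpr <| Nat.pos_of_ne_zero fun hdeg ↦ hμ <| by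
        rw [hpf, Polynomial.eq_C_of_natDegree_eq_zero hdeg, Polynomial.toLaurent_C,
          mu1_eq_mongeAmpere, mongeAmpere_eulerDerivation_C_mul_T]
    obtain ⟨hs1, ht1⟩ := huni <|
      Finset.one_lt_card.mpr ⟨_, Finset.min'_mem _ hS, _, Finset.max'_mem _ hS, by omega⟩
    have h0 : f.coeff 0 ≠ 0 := by
      rw [hcoeff, Nat.cast_zero, add_zero, ← Finsupp.mem_support_iff]
      exact Finset.min'_mem _ _
    have h1 : f.coeff 1 ≠ 0 := by
      rwa [hcoeff, Nat.cast_one, ← Finsupp.mem_support_iff]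
    have hn : f.coeff n ≠ 0 := by
      rwa [hcoeff, ← Finsupp.mem_support_iff, show s + n = p.coeff.support.max' hS - 1 by omega]
    rw [hpf] at hdvd
    obtain ⟨ξ, hξ, heq⟩ := exists_eq_C_mul_T_mul_pow_of_mu1_dvd_pow hdeg h0 h1 hn hdvd
    have hf : f ≠ 0 := Polynomial.ne_zero_of_natDegree_gt (n := 0) (by omega)
    exact ⟨_, ξ, s, n + 1, Polynomial.leadingCoeff_ne_zero.mpr hf, hξ, n.succ_pos, hpf.trans heq⟩
  · rintro ⟨c, ξ, m, ν, hc, hξ, hν, rfl⟩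
    exact ⟨2, two_pos, mu1_C_mul_T_mul_pow_dvd_sq hc hξ hν⟩
end
end
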